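/- arXiv:1402.2317 — 9 statements merged into one kernel-verified Lean document; each statement's English description precedes it below -/
import Mathlib

section
/- Let f : S¹ → S¹ be a continuous map of degree d with |d| > 1, and let F : ℝ → ℝ be a lift of f (so π₀ ∘ F = f ∘ π₀ where π₀(x) = exp(2πix)). Then there exists a continuous map H : ℝ → ℝ such that H(x+1) = H(x) + 1 for all x, H ∘ F = d·H, and the function x ↦ |H(x) − x| is bounded on ℝ. -/
/-!
Write `F = d • id + G` with `G` continuous and `1`-periodic, hence bounded. Looking for
`H = id + φ`, the equation `H ∘ F = d • H` becomes `d • φ = G + φ ∘ F`; iterating it forwards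
gives `φ = ∑ₙ G ∘ F^[n] / dⁿ⁺¹`, which converges uniformly because `G` is bounded and
`|d| > 1`. Since `F^[n]` commutes with the translation `x ↦ x + 1` up to the integer `dⁿ`,
each term is `1`-periodic, and so is `φ`.
-/

noncomputable section

/-- The circle `S¹ = ℝ/ℤ`. -/
abbrev S1 := AddCircle (1 : ℝ)

/-- The universal covering projection `π₀ : ℝ → S¹`. -/
def proj : ℝ → S1 := fun x => (x : S1)

open Function

def weightedOrbitSum (g F : ℝ → ℝ) (d x : ℝ) : ℝ :=
  ∑' n : ℕ, g (F^[n] x) / d ^ (n + 1)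

section WeightedOrbitSum

variable {g F : ℝ → ℝ} {d C : ℝ}

lemma norm_orbit_term_le (hg : ∀ x, |g x| ≤ C) (n : ℕ) (x : ℝ) :
    ‖g (F^[n] x) / d ^ (n + 1)‖ ≤ C * |d|⁻¹ ^ (n + 1) := by
  rw [Real.norm_eq_abs, abs_div, abs_pow, div_eq_mul_inv, ← inv_pow]
  exact mul_le_mul_of_nonneg_right (hg _) (by positivity)

lemma hasSum_mul_inv_abs_pow (hd : 1 < |d|) :
    HasSum (fun n : ℕ => C * |d|⁻¹ ^ (n + 1)) (C / (|d| - 1)) := by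
  have hr : |d|⁻¹ < 1 := inv_lt_one_of_one_lt₀ hd
  have h := (hasSum_geometric_of_lt_one (by positivity) hr).mul_left (C * |d|⁻¹)
  have hsum : C * |d|⁻¹ * (1 - |d|⁻¹)⁻¹ = C / (|d| - 1) := by
    have : |d| - 1 ≠ 0 := by linarith
    field_simp
  have hterm : (fun n : ℕ => C * |d|⁻¹ ^ (n + 1)) = fun n => C * |d|⁻¹ * |d|⁻¹ ^ n := by
    ext n
    ring
  rwa [hterm, ← hsum]

lemma summable_orbit_terms (hg : ∀ x, |g x| ≤ C) (hd : 1 < |d|) (x : ℝ) :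
    Summable fun n : ℕ => g (F^[n] x) / d ^ (n + 1) :=
  (hasSum_mul_inv_abs_pow hd).summable.of_norm_bounded (norm_orbit_term_le hg · x)

lemma continuous_weightedOrbitSum (hgc : Continuous g) (hF : Continuous F)
    (hg : ∀ x, |g x| ≤ C) (hd : 1 < |d|) : Continuous (weightedOrbitSum g F d) :=
  continuous_tsum (fun n => (hgc.comp (hF.iterate n)).div_const _)
    (hasSum_mul_inv_abs_pow hd).summable (norm_orbit_term_le hg)

lemma abs_weightedOrbitSum_le (hg : ∀ x, |g x| ≤ C) (hd : 1 < |d|) (x : ℝ) :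
    |weightedOrbitSum g F d x| ≤ C / (|d| - 1) :=
  tsum_of_norm_bounded (hasSum_mul_inv_abs_pow hd) (norm_orbit_term_le hg · x)

lemma mul_weightedOrbitSum (hg : ∀ x, |g x| ≤ C) (hd : 1 < |d|) (x : ℝ) :
    d * weightedOrbitSum g F d x = g x + weightedOrbitSum g F d (F x) := by
  have hd0 : d ≠ 0 := abs_pos.mp (one_pos.trans hd)
  rw [weightedOrbitSum, ← tsum_mul_left,
    ((summable_orbit_terms hg hd x).mul_left d).tsum_eq_zero_add]
  congr 1
  · rw [iterate_zero_apply, zero_add, pow_one, mul_div_cancel₀ _ hd0]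
  · refine tsum_congr fun n => ?_
    rw [iterate_succ_apply, pow_succ]
    field_simp

lemma periodic_weightedOrbitSum {c : ℝ} (h : ∀ n, Periodic (g ∘ F^[n]) c) :
    Periodic (weightedOrbitSum g F d) c := fun x => by
  simp only [weightedOrbitSum]
  exact tsum_congr fun n => by rw [← comp_apply (f := g), h n, comp_apply]

end WeightedOrbitSum

section Lift

variable {F : ℝ → ℝ}

lemma periodic_sub_mul {d : ℝ} (hdeg : ∀ x, F (x + 1) = F x + d) :
    Periodic (fun x => F x - d * x) 1 := fun x => by
  simp only [hdeg]
  ring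

lemma map_add_int {d : ℝ} (hdeg : ∀ x, F (x + 1) = F x + d) (x : ℝ) (k : ℤ) :
    F (x + k) = F x + d * k := by
  have := (periodic_sub_mul hdeg).int_mul k x
  simp only [mul_one] at this
  linarith

lemma iterate_add_one {d : ℤ} (hdeg : ∀ x, F (x + 1) = F x + d) (n : ℕ) (x : ℝ) :
    F^[n] (x + 1) = F^[n] x + (d ^ n : ℤ) := by
  induction n with
  | zero => simp
  | succ n ih =>
    rw [iterate_succ_apply', iterate_succ_apply', ih, map_add_int hdeg]
    push_cast
    ring

lemma periodic_sub_mul_comp_iterate {d : ℤ} (hdeg : ∀ x, F (x + 1) = F x + d) (n : ℕ) :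
    Periodic ((fun x => F x - d * x) ∘ F^[n]) 1 := fun x => by
  simp only [comp_apply, iterate_add_one hdeg]
  simpa using (periodic_sub_mul hdeg).int_mul (d ^ n) (F^[n] x)

end Lift

theorem exists_semiconjugating_lift_general
    (d : ℤ) (hd : 1 < |d|)
    (F : ℝ → ℝ) (hF : Continuous F)
    (hdeg : ∀ x : ℝ, F (x + 1) = F x + d) :
    ∃ H : ℝ → ℝ, Continuous H ∧ (∀ x, H (x + 1) = H x + 1) ∧
      (∀ x, H (F x) = (d : ℝ) * H x) ∧ ∃ M : ℝ, ∀ x, |H x - x| ≤ M := by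
  set G : ℝ → ℝ := fun x => F x - d * x
  have hGc : Continuous G := by fun_prop
  have hd' : 1 < |(d : ℝ)| := by exact_mod_cast hd
  obtain ⟨C, hC⟩ := isBounded_iff_forall_norm_le.mp
    ((periodic_sub_mul hdeg).isBounded_of_continuous one_ne_zero hGc)
  replace hC : ∀ x, |G x| ≤ C := fun x => hC _ ⟨x, rfl⟩
  have hper : Periodic (weightedOrbitSum G F d) 1 :=
    periodic_weightedOrbitSum (periodic_sub_mul_comp_iterate hdeg)
  refine ⟨fun x => x + weightedOrbitSum G F d x,
    continuous_id.add (continuous_weightedOrbitSum hGc hF hC hd'), fun x => ?_, fun x => ?_,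
    C / (|(d : ℝ)| - 1), fun x => ?_⟩
  · dsimp only
    rw [hper x]
    ring
  · linear_combination -(mul_weightedOrbitSum (F := F) hC hd' x)
  · simpa using abs_weightedOrbitSum_le (F := F) hC hd' x

/-- for a continuous degree-`d` map `f` of the circle (`|d| > 1`) with
lift `F`, there is a continuous `H : ℝ → ℝ` with `H(x+1) = H(x)+1`, `H ∘ F = d·H`,
and `x ↦ |H x - x|` bounded. -/
theorem exists_semiconjugating_lift
    (d : ℤ) (hd : 1 < |d|)
    (f : S1 → S1) (hf : Continuous f)
    (F : ℝ → ℝ) (hF : Continuous F)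
    (hlift : ∀ x : ℝ, proj (F x) = f (proj x))
    (hdeg : ∀ x : ℝ, F (x + 1) = F x + d) :
    ∃ H : ℝ → ℝ, Continuous H ∧ (∀ x, H (x + 1) = H x + 1) ∧
      (∀ x, H (F x) = (d : ℝ) * H x) ∧ ∃ M : ℝ, ∀ x, |H x - x| ≤ M :=
  exists_semiconjugating_lift_general d hd F hF hdeg
end
end

section
/- Let f : S¹ → S¹ be a continuous map of degree d with |d| > 1 and F a lift of f. The map T on the complete metric space H⁺ = {H : ℝ → ℝ continuous, H(x+1) = H(x)+1} with sup-metric, defined by T(H)(x) = H(F(x))/d, is a contraction with Lipschitz constant 1/|d|, and hence has a unique fixed point. -/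
/-!
Writing `H = id + g`, the condition `H(x + 1) = H(x) + 1` says that `g` is `1`-periodic, and
`T(id + g) = id + Φ g` with `Φ g = (F / d - id) + d⁻¹ • (g ∘ F)`. Since `F(x + 1) = F(x) + d`, the
function `F / d - id` is periodic, hence bounded, so `Φ` is an affine self-map of the Banach space
of bounded continuous functions on `ℝ` whose linear part has norm at most `1 / |d| < 1`; it
preserves the closed subspace of `1`-periodic functions. The Banach fixed point theorem then gives the unique fixed point.
-/

noncomputable section

/-- Membership in the space `ℋ⁺` of continuous maps `H : ℝ → ℝ` with `H(x+1) = H(x)+1`. -/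
def MemHplus (H : ℝ → ℝ) : Prop := Continuous H ∧ ∀ x, H (x + 1) = H x + 1

/-- The operator `T(H)(x) = H(F(x))/d`. -/
def Toper (F : ℝ → ℝ) (d : ℤ) (H : ℝ → ℝ) : ℝ → ℝ := fun x => H (F x) / d

open Function Set Filter BoundedContinuousFunction

theorem ContractingWith.fixedPoint_mem_of_mapsTo {α : Type*} [MetricSpace α] [CompleteSpace α]
    [Nonempty α] {K : NNReal} {f : α → α} (hf : ContractingWith K f) {s : Set α}
    (hs : IsClosed s) (hfs : MapsTo f s s) {x : α} (hx : x ∈ s) : fixedPoint f hf ∈ s :=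
  hs.mem_of_tendsto (hf.tendsto_iterate_fixedPoint x) (Eventually.of_forall fun n => hfs.iterate n hx)

theorem BoundedContinuousFunction.isClosed_setOf_periodic {α β : Type*} [TopologicalSpace α]
    [Add α] [MetricSpace β] (c : α) : IsClosed {g : α →ᵇ β | Periodic g c} := by
  simp only [Periodic, ofPred_forall]
  exact isClosed_iInter fun x => isClosed_eq (continuous_eval_const _) (continuous_eval_const _)

namespace Function.Periodic

variable {E : Type*} [SeminormedAddCommGroup E] {g : ℝ → E} {c : ℝ}

def toBCF (hg : Periodic g c) (hc : c ≠ 0) (hcont : Continuous g) : ℝ →ᵇ E :=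
  ofNormedAddCommGroup g hcont _ fun x =>
    (isBounded_iff_forall_norm_le.1 (hg.isBounded_of_continuous hc hcont)).choose_spec _ ⟨x, rfl⟩

@[simp]
theorem coe_toBCF (hg : Periodic g c) (hc : c ≠ 0) (hcont : Continuous g) :
    ⇑(hg.toBCF hc hcont) = g :=
  rfl

end Function.Periodic

theorem memHplus_iff_exists_periodic {H : ℝ → ℝ} :
    MemHplus H ↔ ∃ g : ℝ →ᵇ ℝ, Periodic g 1 ∧ H = fun x => x + g x := by
  constructor
  · rintro ⟨hcont, hH⟩
    have hper : Periodic (fun x => H x - x) 1 := fun x => by simp only [hH x]; ring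
    exact ⟨hper.toBCF one_ne_zero (by fun_prop), hper, by ext x; simp⟩
  · rintro ⟨g, hg, rfl⟩
    exact ⟨by fun_prop, fun x => by simp only [hg x]; ring⟩

theorem abs_toper_sub_toper_le {F H₁ H₂ : ℝ → ℝ} {d : ℤ} {C : ℝ} (hC : ∀ x, |H₁ x - H₂ x| ≤ C)
    (x : ℝ) : |Toper F d H₁ x - Toper F d H₂ x| ≤ 1 / |(d : ℝ)| * C := by
  rw [Toper, Toper, ← sub_div, abs_div, one_div_mul_eq_div]
  exact div_le_div_of_nonneg_right (hC (F x)) (abs_nonneg _)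

section Conjugate

variable {F : ℝ → ℝ} (hF : Continuous F) {d : ℤ} (hdeg : ∀ x, F (x + 1) = F x + d)
  (hd0 : (d : ℝ) ≠ 0)

include hdeg hd0 in
theorem periodic_div_sub_id : Periodic (fun x => F x / d - x) 1 := fun x => by
  show F (x + 1) / d - (x + 1) = F x / d - x
  rw [hdeg]
  field_simp
  ring

def conjToper (g : ℝ →ᵇ ℝ) : ℝ →ᵇ ℝ :=
  (periodic_div_sub_id hdeg hd0).toBCF one_ne_zero (by fun_prop) +
    (d : ℝ)⁻¹ • g.compContinuous ⟨F, hF⟩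

theorem toper_id_add (g : ℝ →ᵇ ℝ) :
    Toper F d (fun x => x + g x) = fun x => x + conjToper hF hdeg hd0 g x := by
  ext x
  simp only [Toper, conjToper, coe_add, Periodic.coe_toBCF, coe_smul, compContinuous_apply,
    ContinuousMap.coe_mk, smul_eq_mul, Pi.add_apply]
  field_simp
  ring

theorem mapsTo_conjToper_setOf_periodic :
    MapsTo (conjToper hF hdeg hd0) {g | Periodic g 1} {g | Periodic g 1} := fun g hg x => by
  have hgd : g (F x + d) = g (F x) := by simpa using hg.int_mul d (F x)
  simp only [conjToper, coe_add, Periodic.coe_toBCF, coe_smul, compContinuous_apply,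
    ContinuousMap.coe_mk, smul_eq_mul, Pi.add_apply, hdeg, hgd, add_left_inj]
  field_simp
  ring

theorem contractingWith_conjToper (hd : 1 < |d|) :
    ContractingWith ‖(d : ℝ)⁻¹‖₊ (conjToper hF hdeg hd0) := by
  refine ⟨?_, LipschitzWith.of_dist_le_mul fun g₁ g₂ => ?_⟩
  · have : (1 : ℝ) < |(d : ℝ)| := by exact_mod_cast hd
    simpa [← NNReal.coe_lt_coe] using inv_lt_one_of_one_lt₀ this
  · simp only [conjToper, dist_add_left]
    calc _ ≤ ‖(d : ℝ)⁻¹‖ * dist (g₁.compContinuous ⟨F, hF⟩) (g₂.compContinuous ⟨F, hF⟩) :=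
          dist_smul_le _ _ _
      _ ≤ ‖(d : ℝ)⁻¹‖ * dist g₁ g₂ := by
          gcongr
          simpa using lipschitz_compContinuous ⟨F, hF⟩ |>.dist_le_mul g₁ g₂

include hF hdeg hd0 in
theorem MemHplus.toper {H : ℝ → ℝ} (hH : MemHplus H) : MemHplus (Toper F d H) := by
  obtain ⟨g, hg, rfl⟩ := memHplus_iff_exists_periodic.1 hH
  rw [toper_id_add hF hdeg hd0]
  exact memHplus_iff_exists_periodic.2 ⟨_, mapsTo_conjToper_setOf_periodic hF hdeg hd0 hg, rfl⟩

end Conjugate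

theorem contraction_and_unique_fixed_point_general
    (d : ℤ) (hd : 1 < |d|)
    (F : ℝ → ℝ) (hF : Continuous F)
    (hdeg : ∀ x : ℝ, F (x + 1) = F x + d) :
    (∀ H, MemHplus H → MemHplus (Toper F d H)) ∧
    (∀ H₁ H₂, MemHplus H₁ → MemHplus H₂ → ∀ C : ℝ,
      (∀ x, |H₁ x - H₂ x| ≤ C) →
      ∀ x, |Toper F d H₁ x - Toper F d H₂ x| ≤ (1 / |(d : ℝ)|) * C) ∧
    (∃! H : ℝ → ℝ, MemHplus H ∧ Toper F d H = H) := by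
  have hd0 : (d : ℝ) ≠ 0 := Int.cast_ne_zero.2 (abs_pos.1 (zero_lt_one.trans hd))
  refine ⟨fun H hH => hH.toper hF hdeg hd0, fun H₁ H₂ _ _ C hC => abs_toper_sub_toper_le hC, ?_⟩
  have hΦ := contractingWith_conjToper hF hdeg hd0 hd
  set g₀ := ContractingWith.fixedPoint _ hΦ
  have hg₀ : Periodic g₀ 1 := hΦ.fixedPoint_mem_of_mapsTo (isClosed_setOf_periodic 1)
    (mapsTo_conjToper_setOf_periodic hF hdeg hd0) (x := 0) fun _ => rfl
  refine ⟨fun x => x + g₀ x, ⟨memHplus_iff_exists_periodic.2 ⟨g₀, hg₀, rfl⟩, ?_⟩, ?_⟩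
  · rw [toper_id_add hF hdeg hd0, hΦ.fixedPoint_isFixedPt]
  · rintro H ⟨hH, hTH⟩
    obtain ⟨g, -, rfl⟩ := memHplus_iff_exists_periodic.1 hH
    suffices IsFixedPt (conjToper hF hdeg hd0) g by rw [hΦ.fixedPoint_unique this]
    ext x
    simpa [toper_id_add hF hdeg hd0] using congrFun hTH x

/-- the operator `T` preserves `ℋ⁺`, contracts the sup-metric with
Lipschitz constant `1/|d|`, and has a unique fixed point in `ℋ⁺`. -/
theorem contraction_and_unique_fixed_point
    (d : ℤ) (hd : 1 < |d|)
    (f : S1 → S1) (hf : Continuous f)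
    (F : ℝ → ℝ) (hF : Continuous F)
    (hlift : ∀ x : ℝ, proj (F x) = f (proj x))
    (hdeg : ∀ x : ℝ, F (x + 1) = F x + d) :
    (∀ H, MemHplus H → MemHplus (Toper F d H)) ∧
    (∀ H₁ H₂, MemHplus H₁ → MemHplus H₂ → ∀ C : ℝ,
      (∀ x, |H₁ x - H₂ x| ≤ C) →
      ∀ x, |Toper F d H₁ x - Toper F d H₂ x| ≤ (1 / |(d : ℝ)|) * C) ∧
    (∃! H : ℝ → ℝ, MemHplus H ∧ Toper F d H = H) :=
  contraction_and_unique_fixed_point_general d hd F hF hdeg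
end
end

section
/- Let f : S¹ → S¹ be a continuous map of degree d, |d| > 1, F a lift of f, and H ∈ H⁺ the unique fixed point of the operator T(H) = (H∘F)/d. Then for every x ∈ ℝ, H(x) = lim_{n→∞} Fⁿ(x)/dⁿ. In particular this limit (the rotation number of x) exists for every point x. -/
/-!
Iterating `H ∘ F = d * H` gives `H (Fⁿ x) = dⁿ * H x`. The displacement `H - id` is continuous
and `1`-periodic, hence bounded by some `C`, so `|Fⁿ x / dⁿ - H x| = |Fⁿ x - H (Fⁿ x)| / |d|ⁿ`
is at most `C / |d|ⁿ → 0`.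
-/

noncomputable section

open Filter Topology

theorem exists_abs_sub_le_of_map_add_const {H : ℝ → ℝ} {c : ℝ} (hH : Continuous H)
    (hc : c ≠ 0) (hper : ∀ x, H (x + c) = H x + c) : ∃ C, ∀ x, |H x - x| ≤ C := by
  have hperiodic : Function.Periodic (fun x => H x - x) c := fun x => by
    simp only [hper x]; ring
  obtain ⟨C, hC⟩ := isBounded_iff_forall_norm_le.mp
    (hperiodic.isBounded_of_continuous hc (hH.sub continuous_id))
  exact ⟨C, fun x => hC _ (Set.mem_range_self x)⟩

theorem tendsto_div_pow_of_abs_sub_pow_mul_le {u : ℕ → ℝ} {d L C : ℝ} (hd : 1 < |d|)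
    (hu : ∀ n, |u n - d ^ n * L| ≤ C) : Tendsto (fun n => u n / d ^ n) atTop (𝓝 L) := by
  have hd0 : d ≠ 0 := by rintro rfl; norm_num at hd
  have hgeom : Tendsto (fun n : ℕ => C * |d|⁻¹ ^ n) atTop (𝓝 0) := by
    simpa using (tendsto_pow_atTop_nhds_zero_of_lt_one (by positivity)
      (inv_lt_one_of_one_lt₀ hd)).const_mul C
  refine tendsto_iff_norm_sub_tendsto_zero.mpr (squeeze_zero (fun _ => norm_nonneg _) ?_ hgeom)
  intro n
  calc ‖u n / d ^ n - L‖ = |u n - d ^ n * L| * |d|⁻¹ ^ n := by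
        rw [Real.norm_eq_abs, inv_pow, ← abs_pow, ← abs_inv, ← abs_mul]
        congr 1
        field_simp
    _ ≤ C * |d|⁻¹ ^ n := by gcongr; exact hu n

theorem fixed_point_is_rotation_number_general
    (d : ℤ) (hd : 1 < |d|)
    (F : ℝ → ℝ)
    (H : ℝ → ℝ) (hH : Continuous H) (hper : ∀ x, H (x + 1) = H x + 1)
    (hfix : ∀ x, H (F x) / d = H x) :
    ∀ x : ℝ, Tendsto (fun n : ℕ => F^[n] x / (d : ℝ) ^ n) atTop (𝓝 (H x)) := by
  intro x
  have hd' : (1 : ℝ) < |(d : ℝ)| := by exact_mod_cast hd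
  have hd0 : (d : ℝ) ≠ 0 := Int.cast_ne_zero.mpr (by rintro rfl; simp at hd)
  have hsemiconj : Function.Semiconj H F (d * ·) := fun y => by
    simp only [← hfix y, mul_div_cancel₀ _ hd0]
  have horbit (n : ℕ) : H (F^[n] x) = (d : ℝ) ^ n * H x := by
    rw [(hsemiconj.iterate_right n) x, mul_left_iterate]
  obtain ⟨C, hC⟩ := exists_abs_sub_le_of_map_add_const hH one_ne_zero hper
  refine tendsto_div_pow_of_abs_sub_pow_mul_le hd' (C := C) fun n => ?_
  rw [← horbit, abs_sub_comm]
  exact hC _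

/-- if `H` is the fixed point of `T(H) = (H∘F)/d` in `ℋ⁺`, then
`H(x) = lim Fⁿ(x)/dⁿ` for every `x`; in particular the rotation number exists
at every point. -/
theorem fixed_point_is_rotation_number
    (d : ℤ) (hd : 1 < |d|)
    (f : S1 → S1) (hf : Continuous f)
    (F : ℝ → ℝ) (hF : Continuous F)
    (hlift : ∀ x : ℝ, proj (F x) = f (proj x))
    (hdeg : ∀ x : ℝ, F (x + 1) = F x + d)
    (H : ℝ → ℝ) (hH : Continuous H) (hper : ∀ x, H (x + 1) = H x + 1)
    (hfix : ∀ x, H (F x) / d = H x) :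
    ∀ x : ℝ, Tendsto (fun n : ℕ => F^[n] x / (d : ℝ) ^ n) atTop (𝓝 (H x)) :=
  fixed_point_is_rotation_number_general d hd F H hH hper hfix
end
end

section
/- Let f : S¹ → S¹ be a covering map of degree d with |d| > 1. Then every semiconjugacy h from f to m_d (i.e., continuous h with h∘f = m_d∘h and h inducing an isomorphism on the fundamental group) is monotone, i.e., has a monotone lift to ℝ. -/
noncomputable section

/-- `m_d : S¹ → S¹` (multiplicatively `z ↦ z^d`). -/
def md (d : ℤ) : S1 → S1 := fun z => d • z

/-- `h` is a semiconjugacy from `f` to `m_d`: it is continuous, satisfies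
`h ∘ f = m_d ∘ h`, and induces an isomorphism on `π₁(S¹) ≅ ℤ`
(i.e. it lifts to `H : ℝ → ℝ` with `H(x+1) = H(x) ± 1`). -/
def IsSemiconj (f h : S1 → S1) (d : ℤ) : Prop :=
  Continuous h ∧ (∀ z, h (f z) = md d (h z)) ∧
    ∃ e : ℤ, (e = 1 ∨ e = -1) ∧ ∃ H : ℝ → ℝ, Continuous H ∧
      (∀ x, proj (H x) = h (proj x)) ∧ ∀ x, H (x + 1) = H x + e

/-!
Lift everything to `ℝ`. The lift `F` of the covering map is a local homeomorphism, hence open,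
hence strictly monotone or antitone, so `F ∘ F` is monotone. The semiconjugacy equation lifts to
`H ∘ F = d • H + c`, so the normalized lift `G = ± H`, which stays at bounded distance from the
identity, satisfies `G ∘ F ∘ F = d² • G + c'`. If `G` decreased somewhere, iterating `F ∘ F`
would blow the decrease up by `d²ⁿ` while `F ∘ F` preserves order, contradicting the bounded
distance of `G` from the identity.
-/

open Set Function

section OpenMap

variable {α δ : Type*} [ConditionallyCompleteLinearOrder α] [TopologicalSpace α] [OrderTopology α]
  [DenselyOrdered α] [LinearOrder δ] [TopologicalSpace δ] [OrderTopology δ] [DenselyOrdered δ]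
  [NoMinOrder δ] [NoMaxOrder δ]

/-- On `[a, b]` with `f a = f b`, an extremum is attained in the interior, where an open map
cannot attain it. -/
theorem Continuous.injective_of_isOpenMap {f : α → δ} (hf : Continuous f) (hfo : IsOpenMap f) :
    Injective f := by
  refine Injective.of_lt_imp_ne fun a b hab hfab => ?_
  obtain ⟨c, hc, hmax⟩ :=
    isCompact_Icc.exists_isMaxOn (nonempty_Icc.2 hab.le) hf.continuousOn
  obtain ⟨c', hc', hmin⟩ :=
    isCompact_Icc.exists_isMinOn (nonempty_Icc.2 hab.le) hf.continuousOn
  have hsub : f '' Ioo a b ⊆ Ioo (f c') (f c) := by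
    rw [← interior_Icc (a := f c') (b := f c)]
    refine interior_maximal ?_ (hfo _ isOpen_Ioo)
    rintro _ ⟨x, hx, rfl⟩
    exact ⟨hmin (Ioo_subset_Icc_self hx), hmax (Ioo_subset_Icc_self hx)⟩
  have hends : ∀ x ∈ Icc a b, f x ∈ Ioo (f c') (f c) ∨ f x = f a := by
    intro x hx
    by_cases hx' : x ∈ Ioo a b
    · exact .inl (hsub (mem_image_of_mem f hx'))
    · have : x ∈ ({a, b} : Set α) := Icc_sdiff_Ioo_same hab.le ▸ ⟨hx, hx'⟩
      rcases this with rfl | rfl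
      exacts [.inr rfl, .inr hfab.symm]
  obtain ⟨x, hx⟩ := nonempty_Ioo.2 hab
  have hfx := hsub (mem_image_of_mem f hx)
  rcases hends c hc with h | h
  · exact lt_irrefl _ h.2
  rcases hends c' hc' with h' | h'
  · exact lt_irrefl _ h'.1
  rw [h, h'] at hfx
  exact lt_asymm hfx.1 hfx.2

end OpenMap

theorem monotone_of_isBounded_sub_id {G φ : ℝ → ℝ} {l c : ℝ} (hl : 1 < l) (hφ : Monotone φ)
    (hbdd : Bornology.IsBounded (range fun x => G x - x)) (hconj : ∀ x, G (φ x) = l * G x + c) :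
    Monotone G := by
  intro a b hab
  by_contra! hlt
  obtain ⟨C, hC⟩ := isBounded_iff_forall_norm_le.1 hbdd
  have hC' : ∀ x, |G x - x| ≤ C := fun x => hC _ (mem_range_self x)
  have hiter : ∀ n : ℕ, G (φ^[n] a) - G (φ^[n] b) = l ^ n * (G a - G b) := by
    intro n
    induction n with
    | zero => simp
    | succ n ih =>
      rw [iterate_succ_apply', iterate_succ_apply', hconj, hconj, pow_succ]
      linear_combination l * ih
  obtain ⟨n, hn⟩ := pow_unbounded_of_one_lt (2 * C / (G a - G b)) hl
  rw [div_lt_iff₀ (sub_pos.2 hlt)] at hn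
  have hord : φ^[n] a ≤ φ^[n] b := hφ.iterate n hab
  have ha := abs_le.1 (hC' (φ^[n] a))
  have hb := abs_le.1 (hC' (φ^[n] b))
  linarith [hiter n]

theorem proj_zsmul (d : ℤ) (x : ℝ) : d • proj x = proj (d * x) := by
  simp only [proj, ← AddCircle.coe_zsmul, zsmul_eq_mul]

/-- `H ∘ F - d • H` is a continuous lift of the constant `0 : S¹`, hence constant. -/
theorem exists_lift_comp_eq_mul_add {d : ℤ} {F H : ℝ → ℝ} (hF : Continuous F) (hH : Continuous H)
    (hsc : ∀ x, proj (H (F x)) = d • proj (H x)) : ∃ c : ℝ, ∀ x, H (F x) = d * H x + c := by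
  have hzero : ∀ x, proj (H (F x) - d * H x) = 0 := fun x => by
    rw [show proj (H (F x) - d * H x) = proj (H (F x)) - proj (d * H x) from
      AddCircle.coe_sub _ _ _, hsc, proj_zsmul, sub_self]
  have hconst := (AddCircle.isCoveringMap_coe (1 : ℝ)).const_of_comp
    (g := fun x => H (F x) - d * H x) (by fun_prop) fun x y => (hzero x).trans (hzero y).symm
  exact ⟨H (F 0) - d * H 0, fun x => by linarith [hconst x 0]⟩

theorem semiconj_of_covering_is_monotone_general
    (d : ℤ) (hd : 1 < |d|)
    (f : S1 → S1) (hcov : IsCoveringMap f)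
    (F : ℝ → ℝ) (hF : Continuous F)
    (hlift : ∀ x : ℝ, proj (F x) = f (proj x))
    (h : S1 → S1) (hh : IsSemiconj f h d) :
    ∃ H : ℝ → ℝ, Continuous H ∧ (∀ x, proj (H x) = h (proj x)) ∧
      (Monotone H ∨ Antitone H) := by
  obtain ⟨-, hsemi, e, he, H, hHc, hHlift, hHper⟩ := hh
  refine ⟨H, hHc, hHlift, ?_⟩
  have hFloc : IsLocalHomeomorph F := by
    refine .of_comp ?_ (AddCircle.isLocalHomeomorph_coe (1 : ℝ)) hF
    rw [show ((↑) : ℝ → S1) ∘ F = f ∘ (↑) from funext hlift]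
    exact hcov.isLocalHomeomorph.comp (AddCircle.isLocalHomeomorph_coe 1)
  have hFF : Monotone (F ∘ F) :=
    (hF.strictMono_of_inj (hF.injective_of_isOpenMap hFloc.isOpenMap)).elim
      (fun hm => (hm.comp hm).monotone) (fun ha => (ha.comp ha).monotone)
  obtain ⟨c, hc⟩ := exists_lift_comp_eq_mul_add hF hHc fun x => by
    rw [hHlift, hlift, hsemi, hHlift]; rfl
  have he2 : (e : ℝ) * e = 1 := by rcases he with rfl | rfl <;> norm_num
  have hG : Monotone fun x => (e : ℝ) * H x := by
    refine monotone_of_isBounded_sub_id (l := d ^ 2) (c := d * e * c + e * c)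
      (by exact_mod_cast (one_lt_sq_iff_one_lt_abs d).2 hd) hFF ?_ fun x => ?_
    · refine Periodic.isBounded_of_continuous (c := 1) (fun x => ?_) one_ne_zero (by fun_prop)
      linear_combination (e : ℝ) * hHper x + he2
    · simp only [comp_apply, hc]; ring
  rcases he with rfl | rfl
  · exact .inl fun a b hab => by simpa using hG hab
  · exact .inr fun a b hab => by simpa using hG hab

/-- every semiconjugacy from a covering map of degree `d`, `|d|>1`,
to `m_d` is monotone, i.e. it admits a monotone lift to `ℝ`. -/
theorem semiconj_of_covering_is_monotone
    (d : ℤ) (hd : 1 < |d|)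
    (f : S1 → S1) (hcov : IsCoveringMap f)
    (F : ℝ → ℝ) (hF : Continuous F)
    (hlift : ∀ x : ℝ, proj (F x) = f (proj x))
    (hdeg : ∀ x : ℝ, F (x + 1) = F x + d)
    (h : S1 → S1) (hh : IsSemiconj f h d) :
    ∃ H : ℝ → ℝ, Continuous H ∧ (∀ x, proj (H x) = h (proj x)) ∧
      (Monotone H ∨ Antitone H) :=
  semiconj_of_covering_is_monotone_general d hd f hcov F hF hlift h hh
end
end

section
/- Let f : S¹ → S¹ be a continuous map of degree d, |d| > 1. If h₁ and h₂ are both semiconjugacies from f to m_d, then there exists a unique homeomorphism c of S¹ commuting with m_d such that h₁ = c ∘ h₂. -/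
/-!
Lifts `H₁`, `H₂` of the two semiconjugacies satisfy `Hᵢ ∘ F = d • Hᵢ + mᵢ` with `mᵢ ∈ ℤ`. If
`eᵢ = ±1` are their degrees, `ψ = H₁ - e₁e₂ H₂` is continuous and `1`-periodic, hence bounded, and
`ψ ∘ F = d ψ + k`; as `|d| > 1`, the only bounded solution is the constant `k / (1 - d)`. Thus
`h₁ = c ∘ h₂` with `c z = e₁e₂ z + σ`, and evaluating both semiconjugacy relations gives `d σ = σ`,
i.e. `c` commutes with `m_d`. Uniqueness holds because `h₂` is surjective.
-/
noncomputable section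

lemma exists_int_eq_add_of_proj_eq {G K : ℝ → ℝ} (hG : Continuous G) (hK : Continuous K)
    (h : ∀ x, proj (G x) = proj (K x)) : ∃ m : ℤ, ∀ x, G x = K x + m := by
  have hint : ∀ x, G x - K x ∈ Set.range ((↑) : ℤ → ℝ) := fun x => by
    have : ((G x - K x : ℝ) : S1) = 0 := by rw [AddCircle.coe_sub, sub_eq_zero]; exact h x
    obtain ⟨n, hn⟩ := (AddCircle.coe_eq_zero_iff (1 : ℝ)).1 this
    exact ⟨n, by simpa using hn⟩
  obtain ⟨m, hm⟩ := hint 0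
  refine ⟨m, fun x => ?_⟩
  have := isPreconnected_univ.constant_of_mapsTo (f := fun x => G x - K x)
    Int.isClosedEmbedding_coe_real.isInducing.isDiscrete_range (hG.sub hK).continuousOn
    (fun x _ => hint x) (Set.mem_univ x) (Set.mem_univ 0)
  linarith

lemma exists_int_lift_comp_eq_mul_add {d : ℤ} {f h : S1 → S1} {F H : ℝ → ℝ}
    (hF : Continuous F) (hFf : ∀ x, proj (F x) = f (proj x))
    (hH : Continuous H) (hHh : ∀ x, proj (H x) = h (proj x))
    (hsemi : ∀ z, h (f z) = md d (h z)) : ∃ m : ℤ, ∀ x, H (F x) = d * H x + m :=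
  exists_int_eq_add_of_proj_eq (hH.comp hF) (continuous_const.mul hH) fun x => by
    rw [hHh, hFf, hsemi, ← hHh, md, proj, proj, ← zsmul_eq_mul, AddCircle.coe_zsmul]

lemma eq_zero_of_bddAbove_of_comp_eq_mul {α : Type*} {F : α → α} {ψ : α → ℝ} {d : ℝ}
    (hd : 1 < |d|) (hψ : BddAbove (Set.range fun x => |ψ x|)) (hFψ : ∀ x, ψ (F x) = d * ψ x)
    (x : α) : ψ x = 0 := by
  have : Nonempty α := ⟨x⟩
  have hM : |d| * ⨆ y, |ψ y| ≤ ⨆ y, |ψ y| := by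
    rw [Real.mul_iSup_of_nonneg (abs_nonneg d)]
    exact ciSup_le fun y => by rw [← abs_mul, ← hFψ]; exact le_ciSup hψ (F y)
  have hx := le_ciSup hψ x
  exact abs_nonpos_iff.1 (by nlinarith [abs_nonneg (ψ x)])

lemma Function.Periodic.eq_div_of_comp_eq_mul_add {F ψ : ℝ → ℝ} {c d k : ℝ} (hd : 1 < |d|)
    (hper : Function.Periodic ψ c) (hc : c ≠ 0) (hψ : Continuous ψ)
    (hFψ : ∀ x, ψ (F x) = d * ψ x + k) (x : ℝ) : ψ x = k / (1 - d) := by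
  have hd1 : 1 - d ≠ 0 := fun h => by rw [← sub_eq_zero.1 h, abs_one] at hd; exact lt_irrefl _ hd
  have hbdd := ((hper.comp fun y => |y - k / (1 - d)|).compact_of_continuous hc
    (by fun_prop)).bddAbove
  refine sub_eq_zero.1 (eq_zero_of_bddAbove_of_comp_eq_mul (F := F) hd hbdd (fun y => ?_) x)
  rw [hFψ]
  field_simp
  ring

lemma exists_lift_eq_mul_add {d : ℤ} (hd : 1 < |d|) {f h₁ h₂ : S1 → S1} {F H₁ H₂ : ℝ → ℝ}
    (hF : Continuous F) (hFf : ∀ x, proj (F x) = f (proj x))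
    (hH₁ : Continuous H₁) (hH₁h : ∀ x, proj (H₁ x) = h₁ (proj x))
    (hs₁ : ∀ z, h₁ (f z) = md d (h₁ z))
    (hH₂ : Continuous H₂) (hH₂h : ∀ x, proj (H₂ x) = h₂ (proj x))
    (hs₂ : ∀ z, h₂ (f z) = md d (h₂ z))
    {a : ℝ} (hper : Function.Periodic (fun x => H₁ x - a * H₂ x) 1) :
    ∃ τ : ℝ, ∀ x, H₁ x = a * H₂ x + τ := by
  obtain ⟨m₁, hm₁⟩ := exists_int_lift_comp_eq_mul_add hF hFf hH₁ hH₁h hs₁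
  obtain ⟨m₂, hm₂⟩ := exists_int_lift_comp_eq_mul_add hF hFf hH₂ hH₂h hs₂
  refine ⟨(m₁ - a * m₂) / (1 - d), fun x => ?_⟩
  have := hper.eq_div_of_comp_eq_mul_add (d := d) (k := m₁ - a * m₂)
    (by exact_mod_cast hd) one_ne_zero
    (hH₁.sub (continuous_const.mul hH₂)) (fun y => by rw [hm₁, hm₂]; ring) x
  linarith

lemma IsSemiconj.surjective {f h : S1 → S1} {d : ℤ} (hh : IsSemiconj f h d) :
    Function.Surjective h := by
  obtain ⟨-, -, e, he, H, hH, hHh, hHe⟩ := hh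
  set a := min (H 0) (H 1)
  have hlen : max (H 0) (H 1) = a + 1 := by
    have := hHe 0
    rw [zero_add] at this
    rcases he with rfl | rfl <;> simp [a, this]
  intro z
  obtain ⟨y, hy, rfl⟩ : ∃ y ∈ Set.Icc a (a + 1), proj y = z :=
    ⟨AddCircle.equivIco 1 a z, Set.Ico_subset_Icc_self (AddCircle.equivIco 1 a z).2,
      (AddCircle.equivIco 1 a).symm_apply_apply z⟩
  obtain ⟨x, -, rfl⟩ := intermediate_value_uIcc (a := 0) (b := 1) hH.continuousOn
    (show y ∈ Set.uIcc (H 0) (H 1) by rwa [Set.uIcc, hlen])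
  exact ⟨proj x, (hHh x).symm⟩

lemma isHomeomorph_zsmul_add {G : Type*} [AddCommGroup G] [TopologicalSpace G]
    [IsTopologicalAddGroup G] {ε : ℤ} (hε : ε * ε = 1) (σ : G) :
    IsHomeomorph fun z : G => ε • z + σ :=
  isHomeomorph_iff_exists_inverse.2 ⟨by fun_prop, fun z => ε • (z - σ),
    fun z => by simp [smul_smul, hε], fun z => by simp [smul_smul, hε], by fun_prop⟩

lemma IsSemiconj.exists_eq_zsmul_add {d : ℤ} (hd : 1 < |d|) {f h₁ h₂ : S1 → S1} {F : ℝ → ℝ}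
    (hF : Continuous F) (hFf : ∀ x, proj (F x) = f (proj x))
    (hh₁ : IsSemiconj f h₁ d) (hh₂ : IsSemiconj f h₂ d) :
    ∃ ε : ℤ, ε * ε = 1 ∧ ∃ σ : S1, ∀ z, h₁ z = ε • h₂ z + σ := by
  obtain ⟨-, hs₁, e₁, he₁, H₁, hH₁, hH₁h, hH₁e⟩ := hh₁
  obtain ⟨-, hs₂, e₂, he₂, H₂, hH₂, hH₂h, hH₂e⟩ := hh₂
  have hsq : ∀ e : ℤ, e = 1 ∨ e = -1 → e * e = 1 := by rintro _ (rfl | rfl) <;> rfl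
  have he₂sq : (e₂ * e₂ : ℝ) = 1 := by exact_mod_cast hsq e₂ he₂
  obtain ⟨τ, hτ⟩ := exists_lift_eq_mul_add hd hF hFf hH₁ hH₁h hs₁ hH₂ hH₂h hs₂
    (a := ((e₁ * e₂ : ℤ) : ℝ)) fun x => by
      simp only [hH₁e, hH₂e]
      push_cast
      linear_combination (-(e₁ : ℝ)) * he₂sq
  refine ⟨e₁ * e₂, by rw [mul_mul_mul_comm, hsq e₁ he₁, hsq e₂ he₂, one_mul], τ, fun z => ?_⟩
  induction z using QuotientAddGroup.induction_on with
  | H x =>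
    rw [← proj, ← hH₁h, ← hH₂h, hτ, proj, proj, AddCircle.coe_add, ← zsmul_eq_mul,
      AddCircle.coe_zsmul]

theorem semiconjugacies_differ_by_self_conjugacy_general
    (d : ℤ) (hd : 1 < |d|)
    (f : S1 → S1)
    (F : ℝ → ℝ) (hF : Continuous F)
    (hlift : ∀ x : ℝ, proj (F x) = f (proj x))
    (h₁ h₂ : S1 → S1) (hh₁ : IsSemiconj f h₁ d) (hh₂ : IsSemiconj f h₂ d) :
    ∃! c : S1 → S1, IsHomeomorph c ∧ (∀ z, c (md d z) = md d (c z)) ∧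
      ∀ z, h₁ z = c (h₂ z) := by
  obtain ⟨ε, hε, σ, hfact⟩ := IsSemiconj.exists_eq_zsmul_add hd hF hlift hh₁ hh₂
  have hfix : d • σ = σ := by
    have := hh₁.2.1 0
    rw [hfact, hfact, hh₂.2.1, md, md, smul_add, smul_comm] at this
    exact (add_left_cancel this).symm
  refine ⟨fun z => ε • z + σ, ⟨isHomeomorph_zsmul_add hε σ, fun z => ?_, hfact⟩, ?_⟩
  · simp only [md, smul_add, smul_comm ε d, hfix]
  · rintro c ⟨-, -, hc⟩
    funext z
    obtain ⟨w, rfl⟩ := hh₂.surjective z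
    rw [← hc, hfact]

/-- two semiconjugacies from `f` to `m_d` differ by a unique
self-conjugacy of `m_d`. -/
theorem semiconjugacies_differ_by_self_conjugacy
    (d : ℤ) (hd : 1 < |d|)
    (f : S1 → S1) (hf : Continuous f)
    (F : ℝ → ℝ) (hF : Continuous F)
    (hlift : ∀ x : ℝ, proj (F x) = f (proj x))
    (hdeg : ∀ x : ℝ, F (x + 1) = F x + d)
    (h₁ h₂ : S1 → S1) (hh₁ : IsSemiconj f h₁ d) (hh₂ : IsSemiconj f h₂ d) :
    ∃! c : S1 → S1, IsHomeomorph c ∧ (∀ z, c (md d z) = md d (c z)) ∧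
      ∀ z, h₁ z = c (h₂ z) :=
  semiconjugacies_differ_by_self_conjugacy_general d hd f F hF hlift h₁ h₂ hh₁ hh₂
end
end

section
/- Every semiconjugacy from m_d to itself (|d| > 1) is a homeomorphism, and the group of homeomorphisms of S¹ commuting with m_d is generated by the rotations by the (|d−1|)-th roots of unity together with complex conjugation; it is isomorphic to the dihedral group D_{d−1}. -/
/-!
A continuous map `c` commuting with `m_d` lifts to `H : ℝ → ℝ` with `H (x + 1) = H x + e` and
`H (d x) = d H x + m` for integers `e` and `m`. Then `F x = H x - e x + m / (d - 1)` is
`1`-periodic, hence bounded, and `F (d x) = d F x`; as `|d| > 1` this forces `F = 0`, so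
`c z = e z + k / (d - 1)`. Injectivity of `c` forces `e = ±1`. In `D_{|d-1|}`, `r i` acts as the
translation by `i / |d - 1|` and `s r i` as `z ↦ -(z + i / |d - 1|)`.
-/

noncomputable section

/-- The rotation of `S¹` by the `(|d-1|)`-th root of unity `exp(2πij/(d-1))`,
written additively as translation by `j/(d-1)`. -/
def rot (d j : ℤ) : S1 → S1 := fun z => z + (((j : ℝ) / ((d : ℝ) - 1) : ℝ) : S1)

open Function Set

theorem eq_zero_of_isBounded_of_map_eq_mul {α : Type*} {T : α → α} {F : α → ℝ} {d : ℝ}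
    (hd : 1 < |d|) (hF : Bornology.IsBounded (range F)) (hT : ∀ x, F (T x) = d * F x)
    (x : α) : F x = 0 := by
  obtain ⟨M, hM⟩ := hF.exists_norm_le
  have hiter (n : ℕ) : F (T^[n] x) = d ^ n * F x := by
    induction n with
    | zero => simp
    | succ n ih => rw [iterate_succ_apply', hT, ih, pow_succ']; ring
  by_contra hx
  obtain ⟨n, hn⟩ := pow_unbounded_of_one_lt (M / |F x|) hd
  have hbound := hM _ (mem_range_self (T^[n] x))
  rw [Real.norm_eq_abs, hiter, abs_mul, abs_pow] at hbound
  rw [div_lt_iff₀ (abs_pos.mpr hx)] at hn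
  linarith

theorem eq_affine_of_map_add_one_of_map_mul {H : ℝ → ℝ} {d e m : ℝ} (hd : 1 < |d|)
    (hH : Continuous H) (he : ∀ x, H (x + 1) = H x + e) (hm : ∀ x, H (d * x) = d * H x + m)
    (x : ℝ) : H x = e * x - m / (d - 1) := by
  have hd₁ : d - 1 ≠ 0 := by
    intro h
    rw [sub_eq_zero.mp h, abs_one] at hd
    exact lt_irrefl _ hd
  set F : ℝ → ℝ := fun x => H x - e * x + m / (d - 1) with hF
  have hper : Periodic F 1 := fun x => by simp only [hF, he]; ring
  have hmul (x : ℝ) : F (d * x) = d * F x := by simp only [hF, hm]; field_simp; ring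
  have hzero := eq_zero_of_isBounded_of_map_eq_mul hd
    (hper.isBounded_of_continuous one_ne_zero (by fun_prop)) hmul x
  simp only [hF] at hzero
  linarith

theorem exists_int_eq_add_of_coe_eq {X : Type*} [TopologicalSpace X] [ConnectedSpace X]
    {F G : X → ℝ} (hF : Continuous F) (hG : Continuous G) (h : ∀ x, (F x : S1) = G x) :
    ∃ m : ℤ, ∀ x, F x = G x + m := by
  obtain ⟨x₀⟩ := ConnectedSpace.toNonempty (α := X)
  obtain ⟨m, hm⟩ := (AddCircle.coe_eq_zero_iff (1 : ℝ)).mp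
    (by rw [AddCircle.coe_sub, h, sub_self] : ((F x₀ - G x₀ : ℝ) : S1) = 0)
  refine ⟨m, congrFun ((AddCircle.isCoveringMap_coe (1 : ℝ)).eq_of_comp_eq hF
    (hG.add continuous_const) (funext fun x => ?_) x₀ ?_)⟩
  · simp [h]
  · simp only [zsmul_one] at hm
    simp [hm]

theorem exists_continuous_lift {c : S1 → S1} (hc : Continuous c) :
    ∃ H : ℝ → ℝ, Continuous H ∧ ∀ x, (H x : S1) = c x := by
  obtain ⟨t, ht⟩ := QuotientAddGroup.mk_surjective (c 0)
  obtain ⟨H, ⟨-, hH⟩, -⟩ :=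
    (AddCircle.isCoveringMap_coe (1 : ℝ)).existsUnique_continuousMap_lifts
      ⟨fun x : ℝ => c x, by fun_prop⟩ 0 t ht
  exact ⟨H, H.continuous, congrFun hH⟩

theorem zsmul_coe_div_sub_one (d j : ℤ) :
    d • (((j : ℝ) / ((d : ℝ) - 1) : ℝ) : S1) =
      (((j : ℝ) / ((d : ℝ) - 1) : ℝ) : S1) := by
  rcases eq_or_ne d 1 with rfl | hd
  · exact one_zsmul _
  have hd₁ : (d : ℝ) - 1 ≠ 0 := sub_ne_zero.mpr (by exact_mod_cast hd)
  rw [← AddCircle.coe_zsmul, ← sub_eq_zero, ← AddCircle.coe_sub, zsmul_eq_mul,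
    show (d : ℝ) * (j / (d - 1)) - j / (d - 1) = j by field_simp]
  exact (AddCircle.coe_eq_zero_iff 1).mpr ⟨j, by simp⟩

theorem rot_md (d j : ℤ) (z : S1) : rot d j (md d z) = md d (rot d j z) := by
  simp only [rot, md, smul_add, zsmul_coe_div_sub_one]

theorem rot_neg_md (d j : ℤ) (z : S1) : rot d j (-md d z) = md d (rot d j (-z)) := by
  simp only [rot, md, smul_add, smul_neg, zsmul_coe_div_sub_one]

theorem isHomeomorph_rot (d j : ℤ) : IsHomeomorph (rot d j) :=
  (Homeomorph.addRight _).isHomeomorph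

theorem isHomeomorph_rot_neg (d j : ℤ) : IsHomeomorph fun z => rot d j (-z) :=
  (isHomeomorph_rot d j).comp (Homeomorph.neg S1).isHomeomorph

theorem exists_eq_rot_zsmul_of_commute_md {d : ℤ} (hd : 1 < |d|) {c : S1 → S1}
    (hcomm : ∀ z, c (md d z) = md d (c z)) {H : ℝ → ℝ} (hH : Continuous H)
    (hlift : ∀ x, (H x : S1) = c x) {e : ℤ} (he : ∀ x, H (x + 1) = H x + e) :
    ∃ k : ℤ, ∀ z, c z = rot d k (e • z) := by
  obtain ⟨m, hm⟩ := exists_int_eq_add_of_coe_eq (F := fun x => H (d * x))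
    (G := fun x => d * H x) (by fun_prop) (by fun_prop) fun x => by
      simp only [hlift, ← zsmul_eq_mul, AddCircle.coe_zsmul, md] at hcomm ⊢
      exact hcomm x
  refine ⟨-m, fun z => ?_⟩
  obtain ⟨x, rfl⟩ := QuotientAddGroup.mk_surjective z
  have haffine := eq_affine_of_map_add_one_of_map_mul (by exact_mod_cast hd) hH
    (by exact_mod_cast he) hm x
  rw [← hlift x, haffine, rot]
  push_cast
  rw [← AddCircle.coe_zsmul, ← AddCircle.coe_add, zsmul_eq_mul]
  ring_nf

theorem eq_one_or_neg_one_of_injective_zsmul {e : ℤ} (he : Injective fun z : S1 => e • z) :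
    e = 1 ∨ e = -1 := by
  rcases eq_or_ne e 0 with rfl | he₀
  · have := he (a₁ := ZMod.toAddCircle (1 : ZMod 2)) (a₂ := 0) (by simp)
    simp at this
  -- `e • (1 / e) = 0`, so injectivity makes `1 / e` an integer.
  have hu := he (a₁ := (((e : ℝ)⁻¹ : ℝ) : S1)) (a₂ := 0) (by
    simp only [← AddCircle.coe_zsmul, zsmul_eq_mul, smul_zero]
    rw [mul_inv_cancel₀ (by exact_mod_cast he₀)]
    exact (AddCircle.coe_eq_zero_iff 1).mpr ⟨1, one_zsmul 1⟩)
  obtain ⟨n, hn⟩ := (AddCircle.coe_eq_zero_iff 1).mp hu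
  refine Int.eq_one_or_neg_one_of_mul_eq_one (v := n) ?_
  rw [zsmul_one] at hn
  exact_mod_cast (by rw [hn, mul_inv_cancel₀ (by exact_mod_cast he₀)] : (e : ℝ) * n = 1)

theorem isHomeomorph_and_commute_md_iff {d : ℤ} (hd : 1 < |d|) (c : S1 → S1) :
    (IsHomeomorph c ∧ ∀ z, c (md d z) = md d (c z)) ↔
      ∃ j : ℤ, (∀ z, c z = rot d j z) ∨ (∀ z, c z = rot d j (-z)) := by
  constructor
  · rintro ⟨hc, hcomm⟩
    obtain ⟨H, hH, hlift⟩ := exists_continuous_lift hc.continuous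
    obtain ⟨e, he⟩ := exists_int_eq_add_of_coe_eq (F := fun x => H (x + 1)) (G := H)
      (by fun_prop) hH fun x => by simp [hlift]
    obtain ⟨k, hk⟩ := exists_eq_rot_zsmul_of_commute_md hd hcomm hH hlift he
    have hinj : Injective (rot d k ∘ fun z : S1 => e • z) :=
      (funext hk : c = rot d k ∘ fun z : S1 => e • z) ▸ hc.injective
    rcases eq_one_or_neg_one_of_injective_zsmul hinj.of_comp with rfl | rfl
    · exact ⟨k, .inl fun z => by rw [hk, one_zsmul]⟩
    · exact ⟨k, .inr fun z => by rw [hk, neg_one_zsmul]⟩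
  · rintro ⟨j, hj | hj⟩
    · obtain rfl : c = rot d j := funext hj
      exact ⟨isHomeomorph_rot d j, rot_md d j⟩
    · obtain rfl : c = fun z => rot d j (-z) := funext hj
      exact ⟨isHomeomorph_rot_neg d j, rot_neg_md d j⟩

theorem IsSemiconj.isHomeomorph {d : ℤ} (hd : 1 < |d|) {h : S1 → S1}
    (hs : IsSemiconj (md d) h d) : IsHomeomorph h := by
  obtain ⟨-, hcomm, e, he, H, hH, hlift, hdeg⟩ := hs
  obtain ⟨k, hk⟩ := exists_eq_rot_zsmul_of_commute_md hd hcomm hH (fun x => hlift x) hdeg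
  refine ((isHomeomorph_and_commute_md_iff hd h).mpr ⟨k, ?_⟩).1
  rcases he with rfl | rfl
  · exact .inl fun z => by rw [hk, one_zsmul]
  · exact .inr fun z => by rw [hk, neg_one_zsmul]

section Dihedral

variable {G : Type*} [AddCommGroup G] [TopologicalSpace G] [IsTopologicalAddGroup G] {n : ℕ}

def dihedralHomeomorphHom (a : ZMod n →+ G) : DihedralGroup n →* (G ≃ₜ G) where
  toFun
    | .r i => Homeomorph.addRight (a i)
    | .sr i => (Homeomorph.addRight (a i)).trans (Homeomorph.neg G)
  map_one' := by ext z; show z + a 0 = z; simp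
  map_mul' := by
    rintro (i | i) (j | j) <;> ext z <;>
      simp only [DihedralGroup.r_mul_r, DihedralGroup.r_mul_sr, DihedralGroup.sr_mul_r,
        DihedralGroup.sr_mul_sr, Homeomorph.mul_apply, Homeomorph.trans_apply,
        Homeomorph.coe_addRight, Homeomorph.coe_neg, map_add, map_sub] <;> abel

@[simp]
theorem dihedralHomeomorphHom_r_apply (a : ZMod n →+ G) (i : ZMod n) (z : G) :
    dihedralHomeomorphHom a (.r i) z = z + a i := rfl

@[simp]
theorem dihedralHomeomorphHom_sr_apply (a : ZMod n →+ G) (i : ZMod n) (z : G) :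
    dihedralHomeomorphHom a (.sr i) z = -(z + a i) := rfl

theorem dihedralHomeomorphHom_injective {a : ZMod n →+ G} (ha : Injective a)
    (hG : ∃ z : G, -z ≠ z) : Injective (dihedralHomeomorphHom a) := by
  rw [injective_iff_map_eq_one]
  rintro (i | i) h
  · have h₀ : 0 + a i = 0 := DFunLike.congr_fun h 0
    rw [zero_add, map_eq_zero_iff a ha] at h₀
    rw [h₀, DihedralGroup.r_zero]
  · obtain ⟨z, hz⟩ := hG
    have h₀ : -(0 + a i) = 0 := DFunLike.congr_fun h 0
    have h₁ : -(z + a i) = z := DFunLike.congr_fun h z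
    rw [zero_add, neg_eq_zero] at h₀
    rw [h₀, add_zero] at h₁
    exact absurd h₁ hz

end Dihedral

theorem zsmul_toAddCircle_of_dvd_sub_one {n : ℕ} [NeZero n] {d : ℤ} (hd : (n : ℤ) ∣ d - 1)
    (i : ZMod n) : d • ZMod.toAddCircle i = ZMod.toAddCircle i := by
  have hd₁ : (d : ZMod n) = 1 := by
    simpa using ((ZMod.intCast_eq_intCast_iff_dvd_sub 1 d n).mpr hd).symm
  rw [← map_zsmul, zsmul_eq_mul, hd₁, one_mul]

theorem rot_eq_add_toAddCircle {d : ℤ} [NeZero (d - 1).natAbs] (j : ℤ) (z : S1) :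
    rot d j z = z + ZMod.toAddCircle ((j * (d - 1).sign : ℤ) : ZMod (d - 1).natAbs) := by
  rw [rot, ZMod.toAddCircle_intCast]
  congr 2
  have hd₁ : d - 1 ≠ 0 := Int.natAbs_ne_zero.mp (NeZero.ne _)
  rw [Nat.cast_natAbs, Int.cast_abs, Int.cast_sub, Int.cast_one]
  rcases hd₁.lt_or_gt with hneg | hpos
  · rw [Int.sign_eq_neg_one_of_neg hneg, abs_of_neg (by exact_mod_cast hneg)]
    push_cast
    field_simp
  · rw [Int.sign_eq_one_of_pos hpos, abs_of_pos (by exact_mod_cast hpos)]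
    push_cast
    field_simp

theorem exists_dihedralGroup_equiv_commute_md {d : ℤ} (hd : 1 < |d|) :
    ∃ φ : DihedralGroup (d - 1).natAbs → {c : S1 ≃ₜ S1 // ∀ z, c (md d z) = md d (c z)},
      Bijective φ ∧ ∀ g₁ g₂, (φ (g₁ * g₂)).1 = ((φ g₂).1.trans (φ g₁).1) := by
  have : NeZero (d - 1).natAbs :=
    ⟨Int.natAbs_ne_zero.mpr fun h => by simp [sub_eq_zero.mp h] at hd⟩
  set ψ := dihedralHomeomorphHom (ZMod.toAddCircle (N := (d - 1).natAbs))
  have hfix := zsmul_toAddCircle_of_dvd_sub_one (d := d) Int.natAbs_dvd_self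
  have hcomm (g) (z : S1) : ψ g (md d z) = md d (ψ g z) := by
    rcases g with i | i <;> simp [ψ, md, smul_add, hfix]
  have hinj : Injective ψ := dihedralHomeomorphHom_injective (ZMod.toAddCircle_injective _)
    ⟨ZMod.toAddCircle (1 : ZMod 4), by rw [← map_neg, Ne, ZMod.toAddCircle_inj]; decide⟩
  refine ⟨fun g => ⟨ψ g, hcomm g⟩, ⟨fun _ _ h => hinj (congrArg Subtype.val h), ?_⟩,
    map_mul ψ⟩
  rintro ⟨c, hc⟩
  obtain ⟨j, hj | hj⟩ := (isHomeomorph_and_commute_md_iff hd c).mp ⟨c.isHomeomorph, hc⟩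
  · exact ⟨.r (j * (d - 1).sign : ℤ),
      Subtype.ext (Homeomorph.ext fun z => by simp [ψ, hj, rot_eq_add_toAddCircle])⟩
  · exact ⟨.sr (-(j * (d - 1).sign) : ℤ),
      Subtype.ext (Homeomorph.ext fun z => by simp [ψ, hj, rot_eq_add_toAddCircle, add_comm])⟩

/-- every semiconjugacy from `m_d` to itself is a homeomorphism;
the homeomorphisms commuting with `m_d` are exactly the rotations by `(|d-1|)`-th
roots of unity, possibly composed with complex conjugation (`z ↦ -z` additively);
and this group is isomorphic to the dihedral group `D_{d-1}`. -/
theorem self_semiconjugacies_of_md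
    (d : ℤ) (hd : 1 < |d|) :
    (∀ h : S1 → S1, IsSemiconj (md d) h d → IsHomeomorph h) ∧
    (∀ c : S1 → S1,
      (IsHomeomorph c ∧ ∀ z, c (md d z) = md d (c z)) ↔
        ∃ j : ℤ, (∀ z, c z = rot d j z) ∨ (∀ z, c z = rot d j (-z))) ∧
    (∃ φ : DihedralGroup (d - 1).natAbs →
        {c : S1 ≃ₜ S1 // ∀ z, c (md d z) = md d (c z)},
      Function.Bijective φ ∧
        ∀ g₁ g₂, (φ (g₁ * g₂)).1 = ((φ g₂).1.trans (φ g₁).1)) :=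
  ⟨fun _ hs => hs.isHomeomorph hd, isHomeomorph_and_commute_md_iff hd,
    exists_dihedralGroup_equiv_commute_md hd⟩
end
end

section
/- Let f : S¹ → S¹ be a transitive covering map of degree d with |d| > 1 (i.e., some point has dense forward orbit). Then f is topologically conjugate to m_d(z) = z^d. -/
/-!
Let `H x = lim F^[n] x / d ^ n`. Then `H` is continuous, monotone (as `F` is a homeomorphism of
`ℝ`), satisfies `H (x + 1) = H x + 1` and `H ∘ F = d * H`, so it descends to a continuous
surjection `h` of the circle with `h ∘ f = m_d ∘ h`; it remains to see that `h` is injective,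
i.e. that `H` is constant on no interval `I`. If it were, a dense orbit `fⁿ x₀` would visit the
image of `I` at two times `n₁ ≠ n₂`, so `h x₀` would be killed by `d ^ n₂ - d ^ n₁`. The whole
orbit, hence by density the whole circle, would then map into this finite torsion subgroup,
contradicting the surjectivity of `h`.
-/

noncomputable section

open Set Function Filter Topology

theorem Continuous.injective_of_isOpenMap_s7 {X Y : Type*} [ConditionallyCompleteLinearOrder X]
    [DenselyOrdered X] [TopologicalSpace X] [OrderTopology X] [LinearOrder Y] [TopologicalSpace Y]
    [OrderTopology Y] [DenselyOrdered Y] [NoMinOrder Y] [NoMaxOrder Y] {F : X → Y}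
    (hF : Continuous F) (hopen : IsOpenMap F) : Injective F := by
  intro a b hab
  by_contra hne
  wlog hlt : a < b generalizing a b
  · exact this hab.symm (Ne.symm hne) (lt_of_le_of_ne (not_lt.mp hlt) (Ne.symm hne))
  obtain ⟨c, hc, hextr⟩ := exists_Ioo_extr_on_Icc hlt hF.continuousOn hab
  have hloc : IsLocalExtr F c := hextr.isLocalExtr (Icc_mem_nhds hc.1 hc.2)
  exact (hloc.on univ).not_nhds_le_map (by simpa only [nhdsWithin_univ] using hopen.nhds_le c)

theorem monotone_div_of_add_one {F : ℝ → ℝ} {d : ℝ} (hF : Continuous F) (hinj : Injective F)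
    (hdeg : ∀ x, F (x + 1) = F x + d) : Monotone fun x => F x / d := by
  have hd : d = F (0 + 1) - F 0 := by rw [hdeg]; ring
  rcases hF.strictMono_of_inj hinj with hmono | hanti
  · exact hmono.monotone.div_const (by linarith [hmono (lt_add_one (0 : ℝ))])
  · exact fun x y hxy => div_le_div_of_nonpos_of_le (by linarith [hanti (lt_add_one (0 : ℝ))])
      (hanti.antitone hxy)

theorem Monotone.div_comp_mul {φ : ℝ → ℝ} (hφ : Monotone φ) {c : ℝ} (hc : c ≠ 0) :
    Monotone fun v => φ (c * v) / c := by
  rcases hc.lt_or_gt with hneg | hpos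
  · exact fun x y hxy => div_le_div_of_nonpos_of_le hneg.le
      (hφ (mul_le_mul_of_nonpos_left hxy hneg.le))
  · exact (hφ.comp (monotone_mul_left_of_nonneg hpos.le)).div_const hpos.le

theorem Monotone.injective_of_forall_not_subsingleton_image_Ioo {α β : Type*} [LinearOrder α]
    [PartialOrder β] {H : α → β} (hmono : Monotone H)
    (hIoo : ∀ a b, a < b → ¬(H '' Ioo a b).Subsingleton) : Injective H := by
  intro a b hab
  by_contra hne
  wlog hlt : a < b generalizing a b
  · exact this hab.symm (Ne.symm hne) (lt_of_le_of_ne (not_lt.mp hlt) (Ne.symm hne))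
  have hconst : ∀ t ∈ Ioo a b, H t = H a := fun t ht =>
    le_antisymm (hab ▸ hmono ht.2.le) (hmono ht.1.le)
  refine hIoo a b hlt ?_
  rintro _ ⟨s, hs, rfl⟩ _ ⟨t, ht, rfl⟩
  rw [hconst s hs, hconst t ht]

/-- The limit of `F^[n] x / d ^ n`, written as a telescoping series. -/
def semiconjLift (d : ℤ) (F : ℝ → ℝ) (x : ℝ) : ℝ :=
  x + ∑' n : ℕ, (F (F^[n] x) - d * F^[n] x) / (d : ℝ) ^ (n + 1)

namespace semiconjLift

variable {d : ℤ} {F : ℝ → ℝ}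

theorem iterate_add_int (hdeg : ∀ x, F (x + 1) = F x + d) (n : ℕ) (x : ℝ) (m : ℤ) :
    F^[n] (x + m) = F^[n] x + m * (d : ℝ) ^ n := by
  induction n with
  | zero => simp
  | succ n ih =>
    rw [iterate_succ_apply', iterate_succ_apply', ih, pow_succ]
    have := AddConstMapClass.map_add_int' (AddConstMap.mk F hdeg) (F^[n] x) (m * d ^ n)
    simp only [AddConstMap.coe_mk, zsmul_eq_mul] at this
    push_cast at this
    rw [this]
    ring

theorem iterate_div_pow_eq_sum (hd : (d : ℝ) ≠ 0) (x : ℝ) (n : ℕ) :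
    F^[n] x / (d : ℝ) ^ n
      = x + ∑ k ∈ Finset.range n, (F (F^[k] x) - d * F^[k] x) / (d : ℝ) ^ (k + 1) := by
  induction n with
  | zero => simp
  | succ n ih =>
    rw [Finset.sum_range_succ, ← add_assoc, ← ih, iterate_succ_apply']
    field_simp
    ring

theorem exists_summable_bound (hd : 1 < |(d : ℝ)|) (hF : Continuous F)
    (hdeg : ∀ x, F (x + 1) = F x + d) : ∃ u : ℕ → ℝ, Summable u ∧
      ∀ n x, ‖(F (F^[n] x) - d * F^[n] x) / (d : ℝ) ^ (n + 1)‖ ≤ u n := by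
  have hper : Periodic (fun x => F x - d * x) 1 := fun x => by simp only [hdeg]; ring
  obtain ⟨M, hM⟩ := isBounded_iff_forall_norm_le.mp
    (hper.isBounded_of_continuous one_ne_zero (by fun_prop))
  have hr : |(d : ℝ)|⁻¹ < 1 := inv_lt_one_of_one_lt₀ hd
  refine ⟨fun n => M * |(d : ℝ)|⁻¹ ^ (n + 1), ((summable_nat_add_iff 1).mpr
    (summable_geometric_of_lt_one (by positivity) hr)).mul_left M, fun n x => ?_⟩
  rw [norm_div, norm_pow, Real.norm_eq_abs (d : ℝ), div_eq_mul_inv, ← inv_pow]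
  exact mul_le_mul_of_nonneg_right (hM _ (mem_range_self _)) (by positivity)

variable (hd : 1 < |(d : ℝ)|) (hF : Continuous F) (hdeg : ∀ x, F (x + 1) = F x + d)
include hd hF hdeg

theorem continuous : Continuous (semiconjLift d F) := by
  obtain ⟨u, hu, hbound⟩ := exists_summable_bound hd hF hdeg
  exact continuous_id.add (continuous_tsum (fun n => by fun_prop) hu hbound)

theorem tendsto_iterate_div_pow (x : ℝ) :
    Tendsto (fun n => F^[n] x / (d : ℝ) ^ n) atTop (𝓝 (semiconjLift d F x)) := by
  obtain ⟨u, hu, hbound⟩ := exists_summable_bound hd hF hdeg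
  have hsum := hu.of_norm_bounded (hbound · x)
  have hd0 : (d : ℝ) ≠ 0 := abs_pos.mp (zero_lt_one.trans hd)
  simpa only [iterate_div_pow_eq_sum hd0, semiconjLift] using
    hsum.hasSum.tendsto_sum_nat.const_add x

theorem add_int (x : ℝ) (m : ℤ) : semiconjLift d F (x + m) = semiconjLift d F x + m := by
  have hd0 : (d : ℝ) ≠ 0 := abs_pos.mp (zero_lt_one.trans hd)
  refine tendsto_nhds_unique (tendsto_iterate_div_pow hd hF hdeg (x + m)) ?_
  convert (tendsto_iterate_div_pow hd hF hdeg x).add_const (m : ℝ) using 2 with n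
  rw [iterate_add_int hdeg, add_div, mul_div_cancel_right₀ _ (pow_ne_zero n hd0)]

theorem map_apply (x : ℝ) : semiconjLift d F (F x) = d * semiconjLift d F x := by
  have hd0 : (d : ℝ) ≠ 0 := abs_pos.mp (zero_lt_one.trans hd)
  refine tendsto_nhds_unique (tendsto_iterate_div_pow hd hF hdeg (F x)) ?_
  convert ((tendsto_add_atTop_iff_nat 1).mpr (tendsto_iterate_div_pow hd hF hdeg x)).const_mul
    (d : ℝ) using 2 with n
  rw [← iterate_succ_apply, pow_succ]
  field_simp

theorem monotone (hmono : Monotone fun x => F x / d) : Monotone (semiconjLift d F) := by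
  have hd0 : (d : ℝ) ≠ 0 := abs_pos.mp (zero_lt_one.trans hd)
  have hmono_n : ∀ n : ℕ, Monotone fun x => F^[n] x / (d : ℝ) ^ n := by
    intro n
    induction n with
    | zero => exact fun _ _ h => by simpa using h
    | succ n ih =>
      convert (hmono.div_comp_mul (pow_ne_zero n hd0)).comp ih using 1
      ext x
      simp only [comp_apply, iterate_succ_apply', pow_succ]
      field_simp
  exact fun x y hxy => le_of_tendsto_of_tendsto' (tendsto_iterate_div_pow hd hF hdeg x)
    (tendsto_iterate_div_pow hd hF hdeg y) fun n => hmono_n n hxy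

theorem surjective : Surjective (semiconjLift d F) := by
  intro y
  have hmem : y ∈ Icc (semiconjLift d F (0 + ⌊y - semiconjLift d F 0⌋))
      (semiconjLift d F (0 + ⌈y - semiconjLift d F 0⌉)) := by
    rw [add_int hd hF hdeg, add_int hd hF hdeg]
    constructor <;>
      linarith [Int.floor_le (y - semiconjLift d F 0), Int.le_ceil (y - semiconjLift d F 0)]
  exact intermediate_value_univ _ _ (continuous hd hF hdeg) hmem

end semiconjLift

instance : Infinite S1 :=
  haveI : Fact ((0 : ℝ) < 1) := ⟨one_pos⟩
  (AddCircle.equivIco 1 0).infinite_iff.mpr (Ico_infinite (by norm_num)).to_subtype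

theorem isLocalHomeomorph_proj : IsLocalHomeomorph proj := AddCircle.isLocalHomeomorph_coe 1

theorem IsLocalHomeomorph.injective_lift {f : S1 → S1} (hf : IsLocalHomeomorph f)
    {F : ℝ → ℝ} (hF : Continuous F) (hlift : ∀ x, proj (F x) = f (proj x)) : Injective F := by
  have hlocal : IsLocalHomeomorph F := by
    refine .of_comp ?_ isLocalHomeomorph_proj hF
    rw [show proj ∘ F = f ∘ proj from funext hlift]
    exact hf.comp isLocalHomeomorph_proj
  exact hF.injective_of_isOpenMap_s7 hlocal.isOpenMap

theorem proj_eq_proj_iff {x y : ℝ} : proj x = proj y ↔ ∃ m : ℤ, y = x + m := by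
  simp only [proj, QuotientAddGroup.eq, AddSubgroup.mem_zmultiples_iff, zsmul_one]
  exact exists_congr fun m => by constructor <;> intro h <;> linarith

theorem md_iterate (d : ℤ) (n : ℕ) (z : S1) : (md d)^[n] z = d ^ n • z := by
  induction n with
  | zero => simp
  | succ n ih => rw [iterate_succ_apply', ih, md, pow_succ', mul_zsmul]

theorem not_subsingleton_image_of_semiconj_md {X : Type*} [TopologicalSpace X] [T1Space X]
    [∀ x : X, NeBot (𝓝[≠] x)] {f : X → X} {h : X → S1} {d : ℤ} (hd : 1 < |d|)
    (hcont : Continuous h) (hsurj : Surjective h) (hsemi : Semiconj h f (md d)) {x₀ : X}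
    (hdense : Dense (range fun n : ℕ => f^[n] x₀)) {U : Set X} (hU : IsOpen U)
    (hne : U.Nonempty) : ¬(h '' U).Subsingleton := by
  intro hconst
  have horbit : ∀ n, h (f^[n] x₀) = d ^ n • h x₀ := fun n => by
    rw [(hsemi.iterate_right n).eq, md_iterate]
  obtain ⟨_, ⟨n₁, rfl⟩, hn₁⟩ := hdense.exists_mem_open hU hne
  obtain ⟨_, ⟨⟨n₂, rfl⟩, hn₂₁⟩, hn₂⟩ :=
    (hdense.sdiff_singleton (f^[n₁] x₀)).exists_mem_open hU ⟨_, hn₁⟩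
  set N := d ^ n₂ - d ^ n₁
  have hN : N ≠ 0 := sub_ne_zero.mpr fun h => hn₂₁ (by
    rw [Int.pow_right_injective (by zify; exact hd) h]; rfl)
  have htorsion : N • h x₀ = 0 := by
    rw [sub_zsmul, ← horbit, ← horbit, add_neg_eq_zero]
    exact hconst (mem_image_of_mem h hn₂) (mem_image_of_mem h hn₁)
  have hclosed : IsClosed (h ⁻¹' {z | N • z = 0}) :=
    (isClosed_singleton.preimage (continuous_zsmul N)).preimage hcont
  have hall : ∀ x, N • h x = 0 := by
    have : closure (range fun n : ℕ => f^[n] x₀) ⊆ h ⁻¹' {z | N • z = 0} := by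
      refine closure_minimal ?_ hclosed
      rintro _ ⟨n, rfl⟩
      rw [mem_preimage, mem_ofPred_eq, horbit, zsmul_comm (h x₀) _ N, htorsion, zsmul_zero]
    exact fun x => this (hdense.closure_eq ▸ mem_univ x)
  refine infinite_univ (α := S1) ((AddCircle.finite_torsion 1 (Int.natAbs_pos.mpr hN)).subset ?_)
  rintro z -
  obtain ⟨x, rfl⟩ := hsurj z
  exact natAbs_nsmul_eq_zero.mpr (hall x)

section Descent

variable {G : ℝ → ℝ} {g : S1 → S1}

theorem exists_continuous_proj_comp (hG : Continuous G) (hG1 : ∀ x, G (x + 1) = G x + 1) :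
    ∃ g : S1 → S1, Continuous g ∧ ∀ x, g (proj x) = proj (G x) := by
  have hper : Periodic (proj ∘ G) 1 := fun x => by
    simp only [comp_apply, hG1]
    exact proj_eq_proj_iff.mpr ⟨-1, by push_cast; ring⟩
  exact ⟨hper.lift, ((AddCircle.continuous_mk' 1).comp hG).quotient_liftOn' _, fun x => rfl⟩

theorem surjective_of_proj_comp (hg : ∀ x, g (proj x) = proj (G x)) (hsurj : Surjective G) :
    Surjective g := fun z => by
  obtain ⟨y, rfl⟩ := QuotientAddGroup.mk_surjective z
  obtain ⟨x, rfl⟩ := hsurj y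
  exact ⟨proj x, hg x⟩

theorem injective_of_proj_comp (hg : ∀ x, g (proj x) = proj (G x))
    (hG : ∀ (x : ℝ) (m : ℤ), G (x + m) = G x + m) (hinj : Injective G) : Injective g := by
  intro z w hzw
  obtain ⟨x, rfl⟩ := QuotientAddGroup.mk_surjective z
  obtain ⟨y, rfl⟩ := QuotientAddGroup.mk_surjective w
  change g (proj x) = g (proj y) at hzw
  rw [hg, hg, proj_eq_proj_iff] at hzw
  obtain ⟨m, hm⟩ := hzw
  exact proj_eq_proj_iff.mpr ⟨m, hinj (by rw [hm, hG])⟩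

theorem semiconj_md_of_proj_comp {F : ℝ → ℝ} {f : S1 → S1} {d : ℤ}
    (hg : ∀ x, g (proj x) = proj (G x)) (hlift : ∀ x, proj (F x) = f (proj x))
    (hmap : ∀ x, G (F x) = d * G x) : Semiconj g f (md d) := fun z => by
  obtain ⟨x, rfl⟩ := QuotientAddGroup.mk_surjective z
  change g (f (proj x)) = md d (g (proj x))
  rw [← hlift, hg, hg, hmap, md, proj, proj, ← zsmul_eq_mul, QuotientAddGroup.mk_zsmul]

end Descent

/-- a transitive covering map of the circle of degree `d`, `|d|>1`,
is topologically conjugate to `m_d`. -/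
theorem transitive_covering_conjugate_to_md
    (d : ℤ) (hd : 1 < |d|)
    (f : S1 → S1) (hcov : IsCoveringMap f)
    (F : ℝ → ℝ) (hF : Continuous F)
    (hlift : ∀ x : ℝ, proj (F x) = f (proj x))
    (hdeg : ∀ x : ℝ, F (x + 1) = F x + d)
    (htrans : ∃ x : S1, Dense (Set.range fun n : ℕ => f^[n] x)) :
    ∃ h : S1 ≃ₜ S1, ∀ z, h (f z) = md d (h z) := by
  have hd' : 1 < |(d : ℝ)| := by exact_mod_cast hd
  have hFinj := hcov.isLocalHomeomorph.injective_lift hF hlift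
  have hHadd := semiconjLift.add_int hd' hF hdeg
  obtain ⟨h, hcont, hproj⟩ := exists_continuous_proj_comp (semiconjLift.continuous hd' hF hdeg)
    (by exact_mod_cast fun x => hHadd x 1)
  have hsemi := semiconj_md_of_proj_comp hproj hlift (semiconjLift.map_apply hd' hF hdeg)
  have hsurj := surjective_of_proj_comp hproj (semiconjLift.surjective hd' hF hdeg)
  obtain ⟨x₀, hdense⟩ := htrans
  have hHinj : Injective (semiconjLift d F) := by
    refine (semiconjLift.monotone hd' hF hdeg (monotone_div_of_add_one hF hFinj hdeg))
      |>.injective_of_forall_not_subsingleton_image_Ioo fun a b hab hconst => ?_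
    refine not_subsingleton_image_of_semiconj_md hd hcont hsurj hsemi hdense
      (isLocalHomeomorph_proj.isOpenMap _ isOpen_Ioo) ((nonempty_Ioo.mpr hab).image _) ?_
    rw [image_image, funext hproj, ← image_image]
    exact hconst.image proj
  have hbij : Bijective h := ⟨injective_of_proj_comp hproj hHadd hHinj, hsurj⟩
  exact ⟨hcont.homeoOfEquivCompactToT2 (f := .ofBijective h hbij), hsemi⟩
end
end

section
/- Let f : S¹ → S¹ be a covering map of degree d with |d| > 1. Then the set of periodic points of f is dense in the nonwandering set Ω(f). -/
noncomputable section

def nonwandering (f : S1 → S1) : Set S1 :=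
  {x | ∀ U ∈ nhds x, ∃ n : ℕ, 0 < n ∧ (f^[n] '' U ∩ U).Nonempty}

/-!
The lift `F` is locally injective, hence injective, and `h = lim F^[n] / d ^ n` is a continuous
monotone map with `h ∘ F = d * h` and `h (x + k) = h x + k`. Let `c` lift a nonwandering point.
If `h` is not constant near `c`, some `v` close to `h c` is periodic for `t ↦ d t mod 1`, say
`d ^ N v = v + K`; its fibre `h⁻¹ {v}` is a compact set close to `c` which the lift `F^[N] - K`
of `f^[N]` maps into itself, so it contains a fixed point. If `h` is constant near `c`, points
near `c` return near `c` only at multiples of the period `n₀` of `h c` under `t ↦ d t mod 1`;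
as `h` separates the integer translates of its fibres, `c` is then a nonwandering point of the
injective map `F^[n₀] - K₀` of `ℝ`, and such points have period at most two.
-/

open Set Filter Function Topology

-- `x ∈ nonwandering f` unfolds to `IsNonwanderingPt f x`.
def IsNonwanderingPt {X : Type*} [TopologicalSpace X] (σ : X → X) (x : X) : Prop :=
  ∀ U ∈ 𝓝 x, ∃ n, 0 < n ∧ (σ^[n] '' U ∩ U).Nonempty

section LinearOrder

variable {α : Type*} [LinearOrder α] [TopologicalSpace α] [OrderTopology α] {σ : α → α} {x : α}

lemma Monotone.not_isNonwanderingPt_of_map_lt [DenselyOrdered α] (hσ : Continuous σ)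
    (hmono : Monotone σ) (hx : σ x < x) : ¬ IsNonwanderingPt σ x := by
  intro hnw
  obtain ⟨m, hσm, hmx⟩ := exists_between hx
  have hU : Ioi m ∩ σ ⁻¹' Iio m ∈ 𝓝 x :=
    (isOpen_Ioi.inter (isOpen_Iio.preimage hσ)).mem_nhds ⟨hmx, hσm⟩
  obtain ⟨n, hn, _, ⟨u, ⟨hmu, hσu⟩, rfl⟩, hmσ, -⟩ := hnw _ hU
  have hσu' : σ u < m := hσu
  have hdesc : σ^[n] u ≤ σ^[1] u :=
    hmono.antitone_iterate_of_map_le (hσu'.trans hmu).le hn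
  exact (lt_asymm hmσ) (hdesc.trans_lt hσu')

lemma Monotone.isFixedPt_of_isNonwanderingPt [DenselyOrdered α] (hσ : Continuous σ)
    (hmono : Monotone σ) (hx : IsNonwanderingPt σ x) : IsFixedPt σ x := by
  by_contra hne
  rcases lt_or_gt_of_ne hne with hlt | hgt
  · exact hmono.not_isNonwanderingPt_of_map_lt hσ hlt hx
  · exact Monotone.not_isNonwanderingPt_of_map_lt (α := αᵒᵈ) hσ hmono.dual hgt hx

lemma Antitone.isNonwanderingPt_iterate_two_of_lt {p : α} (hanti : Antitone σ)
    (hp : IsFixedPt σ p) (hxp : x < p) (hx : IsNonwanderingPt σ x) :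
    IsNonwanderingPt σ^[2] x := by
  intro U hU
  obtain ⟨n, hn, _, ⟨u, ⟨huU, hup⟩, rfl⟩, hnU, hnp⟩ := hx _ (inter_mem hU (Iio_mem_nhds hxp))
  have hmono : Monotone σ^[2] := fun a b hab => hanti (hanti hab)
  obtain ⟨i, rfl | rfl⟩ := Nat.even_or_odd' n
  · refine ⟨i, by omega, σ^[2 * i] u, ⟨u, huU, by rw [iterate_mul]⟩, hnU⟩
  · -- odd iterates of a point below the fixed point `p` lie above it
    have hle : (σ^[2])^[i] u ≤ p := ((hp.iterate 2).iterate i).symm ▸ hmono.iterate i hup.le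
    have : p ≤ σ^[2 * i + 1] u := by
      rw [iterate_succ_apply', iterate_mul]
      exact hp ▸ hanti hle
    exact absurd hnp this.not_gt

end LinearOrder

section ConditionallyCompleteLinearOrder

variable {α : Type*} [ConditionallyCompleteLinearOrder α] [DenselyOrdered α] [TopologicalSpace α]
  [OrderTopology α] {σ : α → α} {x : α}

lemma Antitone.exists_isFixedPt [Nonempty α] (hσ : Continuous σ) (hanti : Antitone σ) :
    ∃ p, IsFixedPt σ p := by
  obtain ⟨x⟩ := ‹Nonempty α›
  obtain ⟨p, -, hp⟩ :=
    exists_mem_Icc_isFixedPt hσ.continuousOn (min_le_max (a := x) (b := σ x))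
    ((min_le_right _ _).trans (hanti (min_le_left _ _)))
    ((hanti (le_max_left _ _)).trans (le_max_right _ _))
  exact ⟨p, hp⟩

lemma Antitone.isPeriodicPt_two_of_isNonwanderingPt (hσ : Continuous σ) (hanti : Antitone σ)
    (hx : IsNonwanderingPt σ x) : IsPeriodicPt σ 2 x := by
  have : Nonempty α := ⟨x⟩
  obtain ⟨p, hp⟩ := hanti.exists_isFixedPt hσ
  have hmono : Monotone σ^[2] := fun a b hab => hanti (hanti hab)
  rcases lt_trichotomy x p with hxp | rfl | hpx
  · exact hmono.isFixedPt_of_isNonwanderingPt (hσ.iterate 2)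
      (hanti.isNonwanderingPt_iterate_two_of_lt hp hxp hx)
  · exact hp.isPeriodicPt 2
  · exact hmono.isFixedPt_of_isNonwanderingPt (hσ.iterate 2)
      (Antitone.isNonwanderingPt_iterate_two_of_lt (α := αᵒᵈ) hanti.dual hp hpx hx)

lemma IsNonwanderingPt.isPeriodicPt_two (hσ : Continuous σ) (hinj : Injective σ)
    (hx : IsNonwanderingPt σ x) : IsPeriodicPt σ 2 x := by
  rcases hσ.strictMono_of_inj hinj with hmono | hanti
  · exact (hmono.monotone.isFixedPt_of_isNonwanderingPt hσ hx).isPeriodicPt 2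
  · exact hanti.antitone.isPeriodicPt_two_of_isNonwanderingPt hσ hx

lemma IsCompact.exists_mem_Icc_isFixedPt {T : α → α} {Φ : Set α} {a b : α} (hΦ : IsCompact Φ)
    (hne : Φ.Nonempty) (hsub : Φ ⊆ Icc a b) (hT : Continuous T) (hmaps : MapsTo T Φ Φ) :
    ∃ s ∈ Icc a b, IsFixedPt T s := by
  obtain ⟨l, hl, hlΦ⟩ := hΦ.exists_isLeast hne
  obtain ⟨r, hr, hrΦ⟩ := hΦ.exists_isGreatest hne
  obtain ⟨s, hs, hfix⟩ := _root_.exists_mem_Icc_isFixedPt hT.continuousOn (hlΦ hr)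
    (hlΦ (hmaps hl)) (hrΦ (hmaps hr))
  exact ⟨s, Icc_subset_Icc (hsub hl).1 (hsub hr).2 hs, hfix⟩

end ConditionallyCompleteLinearOrder

lemma Continuous.injective_of_isLocallyInjective {F : ℝ → ℝ} (hF : Continuous F)
    (hloc : IsLocallyInjective F) : Injective F := by
  suffices ∀ a b, a < b → F a ≠ F b from fun a b hab =>
    by_contra fun hne => (lt_or_gt_of_ne hne).elim (this a b · hab) (this b a · hab.symm)
  intro a b hab hFab
  obtain ⟨c, hc, hext⟩ := exists_Ioo_extr_on_Icc hab hF.continuousOn hFab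
  obtain ⟨U, hUo, hcU, hinj⟩ := hloc c
  obtain ⟨ε, hε, hball⟩ := Metric.nhds_basis_closedBall.mem_iff.1
    (inter_mem (hUo.mem_nhds hcU) (Ioo_mem_nhds hc.1 hc.2))
  rw [Real.closedBall_eq_Icc] at hball
  have hlr : c - ε ≤ c + ε := by linarith
  have hl : c - ε ∈ Icc a b := Ioo_subset_Icc_self (hball (left_mem_Icc.2 hlr)).2
  have hr : c + ε ∈ Icc a b := Ioo_subset_Icc_self (hball (right_mem_Icc.2 hlr)).2
  have hcI : c ∈ Icc (c - ε) (c + ε) := ⟨by linarith, by linarith⟩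
  rcases hF.continuousOn.strictMonoOn_of_injOn_Icc' hlr (hinj.mono fun t ht => (hball ht).1)
    with hmono | hanti
  · rcases hext with hmin | hmax
    · exact (hmono (left_mem_Icc.2 hlr) hcI (by linarith)).not_ge (hmin hl)
    · exact (hmono hcI (right_mem_Icc.2 hlr) (by linarith)).not_ge (hmax hr)
  · rcases hext with hmin | hmax
    · exact (hanti hcI (right_mem_Icc.2 hlr) (by linarith)).not_ge (hmin hr)
    · exact (hanti (left_mem_Icc.2 hlr) hcI (by linarith)).not_ge (hmax hl)

lemma exists_pow_mul_eq_add_intCast_mem_Ioo {d : ℤ} (hd : 1 < |d|) {p q : ℝ} (hpq : p < q) :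
    ∃ N, 0 < N ∧ ∃ v ∈ Ioo p q, ∃ K : ℤ, (d : ℝ) ^ N * v = v + K := by
  have hd2 : (1 : ℝ) < (d : ℝ) ^ 2 := by
    have : (1 : ℝ) < |(d : ℝ)| := by exact_mod_cast hd
    nlinarith [sq_abs (d : ℝ)]
  obtain ⟨M, hM⟩ := pow_unbounded_of_one_lt (1 + 1 / (q - p)) hd2
  set L := (d : ℝ) ^ (2 * M) - 1
  have hgap : 1 < L * (q - p) := by
    rw [← pow_mul] at hM
    have := (div_lt_iff₀ (sub_pos.2 hpq)).1 (show 1 / (q - p) < L by linarith)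
    linarith
  have hL : 0 < L := by nlinarith
  have hM0 : 0 < 2 * M := by
    rcases Nat.eq_zero_or_pos M with rfl | hM0
    · simp [L] at hL
    · omega
  set K := ⌊p * L⌋ + 1
  refine ⟨2 * M, hM0, K / L, ⟨?_, ?_⟩, K, ?_⟩
  · rw [lt_div_iff₀ hL]
    exact_mod_cast Int.lt_floor_add_one (p * L)
  · rw [div_lt_iff₀ hL]
    have := Int.floor_le (p * L)
    push_cast [K]
    nlinarith
  · field_simp
    ring

section Semiconjugacy

variable {d : ℤ} {F : ℝ → ℝ}

lemma iterate_add_intCast (hdeg : ∀ x, F (x + 1) = F x + d) (n : ℕ) (k : ℤ) (x : ℝ) :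
    F^[n] (x + k) = F^[n] x + ↑(k * d ^ n) := by
  induction n generalizing k x with
  | zero => simp
  | succ n ih =>
    have := AddConstMapClass.map_add_int' (⟨F, hdeg⟩ : AddConstMap ℝ ℝ 1 (d : ℝ)) (F^[n] x)
      (k * d ^ n)
    rw [AddConstMap.coe_mk] at this
    rw [iterate_succ_apply', iterate_succ_apply', ih, this, zsmul_eq_mul]
    push_cast
    ring

lemma exists_abs_sub_mul_le (hF : Continuous F) (hdeg : ∀ x, F (x + 1) = F x + d) :
    ∃ C, ∀ x, |F x - d * x| ≤ C := by
  have hper : Periodic (fun x => F x - d * x) 1 := fun x => by simp only [hdeg]; ring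
  obtain ⟨C, hC⟩ := isBounded_iff_forall_norm_le.1
    (hper.isBounded_of_continuous one_ne_zero (hF.sub (continuous_const.mul continuous_id)))
  exact ⟨C, fun x => hC _ (mem_range_self x)⟩

def semiconjToMul (d : ℤ) (F : ℝ → ℝ) (x : ℝ) : ℝ :=
  limUnder atTop fun n => F^[n] x / (d : ℝ) ^ n

lemma tendstoUniformly_iterate_div_pow (hd : 1 < |d|) (hF : Continuous F)
    (hdeg : ∀ x, F (x + 1) = F x + d) :
    TendstoUniformly (fun n x => F^[n] x / (d : ℝ) ^ n) (semiconjToMul d F) atTop := by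
  obtain ⟨C, hC⟩ := exists_abs_sub_mul_le hF hdeg
  have hd' : 1 < |(d : ℝ)| := by exact_mod_cast hd
  have hd0 : (d : ℝ) ≠ 0 := by rintro h; norm_num [h] at hd'
  set r := |(d : ℝ)|⁻¹
  have hr : r < 1 := inv_lt_one_of_one_lt₀ hd'
  have hstep (x : ℝ) (n : ℕ) :
      dist (F^[n] x / (d : ℝ) ^ n) (F^[n + 1] x / (d : ℝ) ^ (n + 1)) ≤ C / |(d : ℝ)| * r ^ n := by
    have : F^[n + 1] x / (d : ℝ) ^ (n + 1) - F^[n] x / (d : ℝ) ^ n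
        = (F (F^[n] x) - d * F^[n] x) / (d : ℝ) ^ (n + 1) := by
      rw [iterate_succ_apply']
      field_simp
      ring
    rw [dist_comm, Real.dist_eq, this, abs_div, abs_pow, div_le_iff₀ (by positivity)]
    calc |F (F^[n] x) - d * F^[n] x| ≤ C := hC _
      _ = C / |(d : ℝ)| * r ^ n * |(d : ℝ)| ^ (n + 1) := by
        simp only [r, inv_pow, pow_succ]
        field_simp
  have hlim (x : ℝ) : Tendsto (fun n => F^[n] x / (d : ℝ) ^ n) atTop (𝓝 (semiconjToMul d F x)) :=
    (cauchySeq_of_le_geometric r _ hr (hstep x)).tendsto_limUnder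
  refine Metric.tendstoUniformly_iff.2 fun ε hε => ?_
  have h0 : Tendsto (fun n : ℕ => C / |(d : ℝ)| * r ^ n / (1 - r)) atTop (𝓝 0) := by
    simpa using ((tendsto_pow_atTop_nhds_zero_of_lt_one (by positivity) hr).const_mul
      (C / |(d : ℝ)|)).div_const (1 - r)
  filter_upwards [h0.eventually (gt_mem_nhds hε)] with n hn x
  rw [dist_comm]
  exact (dist_le_of_le_geometric_of_tendsto r _ hr (hstep x) (hlim x) n).trans_lt hn

lemma monotone_div_of_injective {G : ℝ → ℝ} {e : ℝ} (hG : Continuous G) (hinj : Injective G)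
    (h1 : G 1 = G 0 + e) : Monotone fun x => G x / e := by
  rcases hG.strictMono_of_inj hinj with hmono | hanti
  · have he : 0 < e := by linarith [hmono zero_lt_one]
    exact fun x y hxy => div_le_div_of_nonneg_right (hmono.monotone hxy) he.le
  · have he : e < 0 := by linarith [hanti zero_lt_one]
    exact fun x y hxy => div_le_div_of_nonpos_of_le he.le (hanti.antitone hxy)

variable (hd : 1 < |d|) (hF : Continuous F) (hdeg : ∀ x, F (x + 1) = F x + d)
include hd hF hdeg

lemma continuous_semiconjToMul : Continuous (semiconjToMul d F) :=
  (tendstoUniformly_iterate_div_pow hd hF hdeg).continuous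
    (Frequently.of_forall fun n => (hF.iterate n).div_const _)

lemma semiconjToMul_add_intCast (x : ℝ) (k : ℤ) :
    semiconjToMul d F (x + k) = semiconjToMul d F x + k := by
  have hd0 : (d : ℝ) ≠ 0 := Int.cast_ne_zero.2 (by rintro rfl; simp at hd)
  refine tendsto_nhds_unique ((tendstoUniformly_iterate_div_pow hd hF hdeg).tendsto_at (x + k)) ?_
  convert ((tendstoUniformly_iterate_div_pow hd hF hdeg).tendsto_at x).add_const (k : ℝ) using 2
  rw [iterate_add_intCast hdeg]
  push_cast
  field_simp

lemma semiconjToMul_map (x : ℝ) : semiconjToMul d F (F x) = d * semiconjToMul d F x := by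
  have hd0 : (d : ℝ) ≠ 0 := Int.cast_ne_zero.2 (by rintro rfl; simp at hd)
  have hlim := (tendstoUniformly_iterate_div_pow hd hF hdeg).tendsto_at
  refine tendsto_nhds_unique (hlim (F x)) ?_
  convert ((hlim x).comp (tendsto_add_atTop_nat 1)).const_mul (d : ℝ) using 2 with n
  rw [comp_apply, iterate_succ_apply, pow_succ]
  field_simp

lemma monotone_semiconjToMul (hinj : Injective F) : Monotone (semiconjToMul d F) := fun x y hxy =>
  le_of_tendsto_of_tendsto' ((tendstoUniformly_iterate_div_pow hd hF hdeg).tendsto_at x)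
    ((tendstoUniformly_iterate_div_pow hd hF hdeg).tendsto_at y) fun n =>
    monotone_div_of_injective (hF.iterate n) (hinj.iterate n)
      (by simpa using iterate_add_intCast hdeg n 1 0) hxy

end Semiconjugacy

lemma Function.Semiconj.isLocallyInjective {X Y : Type*} [TopologicalSpace X] {p : X → Y}
    {F : X → X} {f : Y → Y} (h : Semiconj p F f) (hfp : IsLocallyInjective (f ∘ p)) :
    IsLocallyInjective F := fun x =>
  let ⟨U, hU, hx, hinj⟩ := hfp x
  ⟨U, hU, hx, fun s hs t ht hst => hinj hs ht (by simp only [comp_apply, ← h.eq, hst])⟩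

section Circle

lemma proj_eq_proj_iff_s8 {a b : ℝ} : proj a = proj b ↔ ∃ k : ℤ, a = b + k := by
  rw [← sub_eq_zero, proj, proj, ← AddCircle.coe_sub, AddCircle.coe_eq_zero_iff]
  exact exists_congr fun k => by rw [zsmul_one, eq_comm, sub_eq_iff_eq_add']

lemma isPeriodicPt_zsmul_proj_iff (d : ℤ) (m : ℕ) (v : ℝ) :
    IsPeriodicPt (fun y : S1 => d • y) m (proj v) ↔ ∃ K : ℤ, (d : ℝ) ^ m * v = v + K := by
  have hsemi : Semiconj proj (fun t => (d : ℝ) * t) (fun y : S1 => d • y) := fun t => by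
    simp only [proj, ← zsmul_eq_mul, AddCircle.coe_zsmul]
  rw [IsPeriodicPt, IsFixedPt, ← (hsemi.iterate_right m).eq, mul_left_iterate_apply,
    proj_eq_proj_iff_s8]

variable {F : ℝ → ℝ} {f : S1 → S1}

lemma semiconj_iterate_sub_intCast (hlift : Semiconj proj F f) (N : ℕ) (K : ℤ) :
    Semiconj proj (fun t => F^[N] t - K) f^[N] := fun t => by
  rw [← (hlift.iterate_right N).eq]
  exact proj_eq_proj_iff_s8.2 ⟨-K, by push_cast; ring⟩

lemma proj_mem_periodicPts (hlift : Semiconj proj F f) {N j : ℕ} (hN : 0 < N) (hj : 0 < j)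
    {K : ℤ} {s : ℝ} (hs : IsPeriodicPt (fun t => F^[N] t - K) j s) : proj s ∈ periodicPts f := by
  refine mk_mem_periodicPts (Nat.mul_pos hN hj) ?_
  rw [IsPeriodicPt, IsFixedPt, iterate_mul]
  exact hs.map (semiconj_iterate_sub_intCast hlift N K)

lemma IsNonwanderingPt.exists_proj_iterate_eq (hlift : Semiconj proj F f) {c : ℝ}
    (hc : IsNonwanderingPt f (proj c)) {U : Set ℝ} (hU : U ∈ 𝓝 c) :
    ∃ m, 0 < m ∧ ∃ u ∈ U, ∃ w ∈ U, proj (F^[m] u) = proj w := by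
  obtain ⟨m, hm, _, ⟨_, ⟨u, hu, rfl⟩, rfl⟩, w, hw, hwu⟩ :=
    hc _ (QuotientAddGroup.isOpenMap_coe.image_mem_nhds hU)
  exact ⟨m, hm, u, hu, w, hw, ((hlift.iterate_right m).eq u).trans hwu.symm⟩

end Circle

section Fibers

variable {d : ℤ} {F H : ℝ → ℝ} (hHF : ∀ x, H (F x) = d * H x)
  (hHadd : ∀ x (k : ℤ), H (x + k) = H x + k)
include hHF hHadd

lemma map_iterate_sub_intCast (N : ℕ) (K : ℤ) (t : ℝ) :
    H (F^[N] t - K) = d ^ N * H t - K := by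
  have hsemi : Semiconj H F fun y => (d : ℝ) * y := hHF
  rw [sub_eq_add_neg, ← Int.cast_neg, hHadd, (hsemi.iterate_right N).eq, mul_left_iterate_apply,
    Int.cast_neg, ← sub_eq_add_neg]

lemma mapsTo_iterate_sub_intCast_preimage {N : ℕ} {K : ℤ} {v : ℝ}
    (hv : (d : ℝ) ^ N * v = v + K) :
    MapsTo (fun t => F^[N] t - K) (H ⁻¹' {v}) (H ⁻¹' {v}) := fun t (ht : H t = v) => by
  rw [mem_preimage, mem_singleton_iff, map_iterate_sub_intCast hHF hHadd, ht, hv,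
    add_sub_cancel_right]

omit hHF in
lemma eq_of_proj_eq_of_map_eq {s t : ℝ} (hproj : proj s = proj t) (hH : H s = H t) : s = t := by
  obtain ⟨k, rfl⟩ := proj_eq_proj_iff_s8.1 hproj
  rw [hHadd, add_eq_left, Int.cast_eq_zero] at hH
  simp [hH]

lemma exists_isFixedPt_iterate_sub_mem_Icc (hd : 1 < |d|) (hF : Continuous F)
    (hHc : Continuous H) (hHmono : Monotone H) {a b : ℝ} (hab : H a < H b) :
    ∃ s ∈ Icc a b, ∃ N, 0 < N ∧ ∃ K : ℤ, IsFixedPt (fun t => F^[N] t - K) s := by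
  obtain ⟨N, hN, v, hv, K, hK⟩ := exists_pow_mul_eq_add_intCast_mem_Ioo hd hab
  have hsub : H ⁻¹' {v} ⊆ Icc a b := fun t (ht : H t = v) =>
    ⟨(hHmono.reflect_lt (ht ▸ hv.1)).le, (hHmono.reflect_lt (ht ▸ hv.2)).le⟩
  obtain ⟨t, -, ht⟩ := intermediate_value_Icc (hHmono.reflect_lt hab).le hHc.continuousOn
    (Ioo_subset_Icc_self hv)
  obtain ⟨s, hs, hfix⟩ := (isCompact_Icc.of_isClosed_subset (isClosed_singleton.preimage hHc)
    hsub).exists_mem_Icc_isFixedPt ⟨t, ht⟩ hsub ((hF.iterate N).sub continuous_const)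
    (mapsTo_iterate_sub_intCast_preimage hHF hHadd hK)
  exact ⟨s, hs, N, hN, K, hfix⟩

lemma exists_isNonwanderingPt_iterate_sub {f : S1 → S1} (hlift : Semiconj proj F f) {c : ℝ}
    (hc : IsNonwanderingPt f (proj c)) {U₀ : Set ℝ} (hU₀ : U₀ ∈ 𝓝 c)
    (hconst : ∀ t ∈ U₀, H t = H c) :
    ∃ N, 0 < N ∧ ∃ K : ℤ, IsNonwanderingPt (fun t => F^[N] t - K) c := by
  have hperiod (m : ℕ) {u w : ℝ} (hu : u ∈ U₀) (hw : w ∈ U₀) (huw : proj (F^[m] u) = proj w) :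
      IsPeriodicPt (fun y : S1 => d • y) m (proj (H c)) := by
    obtain ⟨k, hk⟩ := proj_eq_proj_iff_s8.1 huw
    refine (isPeriodicPt_zsmul_proj_iff d m (H c)).2 ⟨k, ?_⟩
    have := map_iterate_sub_intCast hHF hHadd m k u
    rw [hk, add_sub_cancel_right, hconst w hw, hconst u hu] at this
    linarith
  obtain ⟨m₀, hm₀, u₀, hu₀, w₀, hw₀, huw₀⟩ := hc.exists_proj_iterate_eq hlift hU₀
  set n₀ := minimalPeriod (fun y : S1 => d • y) (proj (H c))
  have hn₀ : 0 < n₀ := (hperiod m₀ hu₀ hw₀ huw₀).minimalPeriod_pos hm₀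
  obtain ⟨K₀, hK₀⟩ := (isPeriodicPt_zsmul_proj_iff d n₀ (H c)).1 (isPeriodicPt_minimalPeriod _ _)
  set S := fun t => F^[n₀] t - K₀
  refine ⟨n₀, hn₀, K₀, fun U hU => ?_⟩
  obtain ⟨m, hm, u, hu, w, hw, huw⟩ := hc.exists_proj_iterate_eq hlift (inter_mem hU hU₀)
  obtain ⟨q, rfl⟩ := (hperiod m hu.2 hw.2 huw).minimalPeriod_dvd
  have hSq : S^[q] u = w := by
    refine eq_of_proj_eq_of_map_eq hHadd ?_ <|
      ((mapsTo_iterate_sub_intCast_preimage hHF hHadd hK₀).iterate q (hconst u hu.2)).trans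
        (hconst w hw.2).symm
    rw [((semiconj_iterate_sub_intCast hlift n₀ K₀).iterate_right q).eq, ← iterate_mul,
      ← (hlift.iterate_right _).eq, huw]
  exact ⟨q, Nat.pos_of_mul_pos_left hm, w, ⟨u, hu.1, hSq⟩, hw.1⟩

end Fibers

/-- for a covering map of the circle of degree `d`, `|d|>1`, the
periodic points are dense in the nonwandering set. -/
theorem periodic_dense_in_nonwandering
    (d : ℤ) (hd : 1 < |d|)
    (f : S1 → S1) (hcov : IsCoveringMap f)
    (F : ℝ → ℝ) (hF : Continuous F)
    (hlift : ∀ x : ℝ, proj (F x) = f (proj x))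
    (hdeg : ∀ x : ℝ, F (x + 1) = F x + d) :
    nonwandering f ⊆ closure {p : S1 | ∃ n : ℕ, 1 ≤ n ∧ f^[n] p = p} := by
  have hsemi : Semiconj proj F f := hlift
  have hinj : Injective F := hF.injective_of_isLocallyInjective <| hsemi.isLocallyInjective
    (hcov.isLocalHomeomorph.comp (AddCircle.isLocalHomeomorph_coe 1)).isLocallyInjective
  set H := semiconjToMul d F
  have hHmono : Monotone H := monotone_semiconjToMul hd hF hdeg hinj
  have hHF := semiconjToMul_map hd hF hdeg
  have hHadd := semiconjToMul_add_intCast hd hF hdeg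
  intro x hx
  obtain ⟨c, rfl⟩ : ∃ c, proj c = x := QuotientAddGroup.mk_surjective x
  refine mem_closure_iff_nhds.2 fun W hW => ?_
  obtain ⟨ε, hε, hball⟩ := Metric.nhds_basis_closedBall.mem_iff.1
    (continuous_quotient_mk'.continuousAt.preimage_mem_nhds hW)
  rw [Real.closedBall_eq_Icc] at hball
  have hc : c ∈ Icc (c - ε) (c + ε) := ⟨by linarith, by linarith⟩
  rcases (hHmono (hc.1.trans hc.2)).lt_or_eq with hlt | heq
  · obtain ⟨s, hs, N, hN, K, hfix⟩ := exists_isFixedPt_iterate_sub_mem_Icc hHF hHadd hd hF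
      (continuous_semiconjToMul hd hF hdeg) hHmono hlt
    exact ⟨proj s, hball hs, proj_mem_periodicPts hsemi hN one_pos (hfix.isPeriodicPt 1)⟩
  · have hconst (t : ℝ) (ht : t ∈ Icc (c - ε) (c + ε)) : H t = H c := by
      linarith [hHmono ht.1, hHmono ht.2, hHmono hc.1, hHmono hc.2]
    obtain ⟨N, hN, K, hS⟩ := exists_isNonwanderingPt_iterate_sub hHF hHadd hsemi hx
      (Icc_mem_nhds (by linarith) (by linarith)) hconst
    exact ⟨proj c, mem_of_mem_nhds hW, proj_mem_periodicPts hsemi hN two_pos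
      (hS.isPeriodicPt_two ((hF.iterate N).sub continuous_const)
        (sub_left_injective.comp (hinj.iterate N)))⟩
end
end

section
/- Let f : A → A be a continuous map of the open annulus A = (0,1)×S¹ of degree d, |d| > 1, and let F : (0,1)×ℝ → (0,1)×ℝ be a lift of f. If sup over all (x₀,y₀) of |y₁ − d·y₀| is finite (where (x₁,y₁) = F(x₀,y₀)), then there exists a continuous H : (0,1)×ℝ → ℝ with H(x,y+1) = H(x,y)+1, H∘F = d·H, and sup |H(x,y) − y| < ∞. In particular f is semiconjugate to m_d on S¹. -/
noncomputable section

/-- The open annulus `A = (0,1) × S¹`. -/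
abbrev Ann := Set.Ioo (0 : ℝ) 1 × S1

/-- Its universal cover `(0,1) × ℝ`. -/
abbrev AnnCov := Set.Ioo (0 : ℝ) 1 × ℝ

/-- The covering projection of the open annulus. -/
def aproj : AnnCov → Ann := fun p => (p.1, proj p.2)

/-!
The semiconjugacy is `H p = lim (F^[n] p).2 / d ^ n`. The increments of this sequence are
`((F q).2 - d * q.2) / d ^ (n + 1)` with `q = F^[n] p`, bounded by `M / |d| ^ (n + 1)`, so the limit
is uniform (hence `H` is continuous) and stays within `M / (|d| - 1)` of `p.2`. Both functional
equations pass to the limit: `F` shifts the index by one, and a deck translation by `k` is carried by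
`F^[n]` to a translation by `d ^ n * k`.
-/

open Filter Topology Function

theorem hasSum_mul_inv_pow_succ (M : ℝ) {r : ℝ} (hr : 1 < r) :
    HasSum (fun n : ℕ => M * r⁻¹ ^ (n + 1)) (M / (r - 1)) := by
  have h0 : 0 < r := by linarith
  have h1 : r - 1 ≠ 0 := by linarith
  have hsum : M * r⁻¹ * (1 - r⁻¹)⁻¹ = M / (r - 1) := by field_simp
  simp_rw [pow_succ', ← mul_assoc, ← hsum]
  exact (hasSum_geometric_of_lt_one (inv_nonneg.2 h0.le) (inv_lt_one_of_one_lt₀ hr)).mul_left _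

section BoundedDisplacement

variable {X : Type*} (F : X → X) (φ : X → ℝ) (d : ℝ)

def displacement (p : X) : ℝ := φ (F p) - d * φ p

def linearizingCoord (p : X) : ℝ :=
  φ p + ∑' n : ℕ, displacement F φ d (F^[n] p) / d ^ (n + 1)

variable {F φ d}

theorem sum_displacement_div_pow (hd : d ≠ 0) (p : X) (n : ℕ) :
    φ p + ∑ k ∈ Finset.range n, displacement F φ d (F^[k] p) / d ^ (k + 1) =
      φ (F^[n] p) / d ^ n := by
  induction n with
  | zero => simp
  | succ n ih =>
    rw [Finset.sum_range_succ, ← add_assoc, ih, iterate_succ_apply', displacement]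
    field_simp
    ring

variable {M : ℝ} (hd : 1 < |d|) (hM : ∀ p, |displacement F φ d p| ≤ M)
include hd hM

theorem norm_displacement_iterate_div_le (p : X) (n : ℕ) :
    ‖displacement F φ d (F^[n] p) / d ^ (n + 1)‖ ≤ M * |d|⁻¹ ^ (n + 1) := by
  rw [Real.norm_eq_abs, abs_div, abs_pow, div_eq_mul_inv, ← inv_pow]
  exact mul_le_mul_of_nonneg_right (hM _) (by positivity)

theorem summable_displacement_iterate_div (p : X) :
    Summable fun n : ℕ => displacement F φ d (F^[n] p) / d ^ (n + 1) :=
  .of_norm_bounded (hasSum_mul_inv_pow_succ M hd).summable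
    (norm_displacement_iterate_div_le hd hM p)

theorem tendsto_div_pow_linearizingCoord (p : X) :
    Tendsto (fun n => φ (F^[n] p) / d ^ n) atTop (𝓝 (linearizingCoord F φ d p)) := by
  have hd0 : d ≠ 0 := abs_pos.1 (one_pos.trans hd)
  simp_rw [← sum_displacement_div_pow hd0]
  exact ((summable_displacement_iterate_div hd hM p).hasSum.tendsto_sum_nat).const_add _

theorem linearizingCoord_apply_map (p : X) :
    linearizingCoord F φ d (F p) = d * linearizingCoord F φ d p := by
  have hd0 : d ≠ 0 := abs_pos.1 (one_pos.trans hd)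
  refine tendsto_nhds_unique (tendsto_div_pow_linearizingCoord hd hM (F p)) ?_
  have := ((tendsto_add_atTop_iff_nat 1).2 (tendsto_div_pow_linearizingCoord hd hM p)).const_mul d
  refine this.congr fun n => ?_
  rw [← iterate_succ_apply, pow_succ]
  field_simp

theorem linearizingCoord_apply_eq_add {T : X → X} {c : ℝ}
    (hT : ∀ n p, φ (F^[n] (T p)) = φ (F^[n] p) + d ^ n * c) (p : X) :
    linearizingCoord F φ d (T p) = linearizingCoord F φ d p + c := by
  have hd0 : d ≠ 0 := abs_pos.1 (one_pos.trans hd)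
  refine tendsto_nhds_unique (tendsto_div_pow_linearizingCoord hd hM (T p)) ?_
  refine ((tendsto_div_pow_linearizingCoord hd hM p).add_const c).congr fun n => ?_
  rw [hT]
  field_simp

theorem abs_linearizingCoord_sub_le (p : X) :
    |linearizingCoord F φ d p - φ p| ≤ M / (|d| - 1) := by
  rw [linearizingCoord, add_sub_cancel_left, ← Real.norm_eq_abs]
  exact tsum_of_norm_bounded (hasSum_mul_inv_pow_succ M hd)
    (norm_displacement_iterate_div_le hd hM p)

theorem continuous_linearizingCoord [TopologicalSpace X] (hF : Continuous F) (hφ : Continuous φ) :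
    Continuous (linearizingCoord F φ d) := by
  refine hφ.add (continuous_tsum (fun n => ?_) (hasSum_mul_inv_pow_succ M hd).summable
    fun n p => norm_displacement_iterate_div_le hd hM p n)
  exact (((hφ.comp hF).sub (continuous_const.mul hφ)).comp (hF.iterate n)).div_const _

end BoundedDisplacement

section VerticalShift

variable {α : Type*}

def vshift (t : ℝ) (p : α × ℝ) : α × ℝ := (p.1, p.2 + t)

@[simp] theorem vshift_fst (t : ℝ) (p : α × ℝ) : (vshift t p).1 = p.1 := rfl

@[simp] theorem vshift_snd (t : ℝ) (p : α × ℝ) : (vshift t p).2 = p.2 + t := rfl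

theorem vshift_zero : vshift (0 : ℝ) = (id : α × ℝ → α × ℝ) := by
  ext p <;> simp

theorem vshift_add (s t : ℝ) : vshift (s + t) = (vshift s ∘ vshift t : α × ℝ → α × ℝ) := by
  ext p <;> simp [add_assoc, add_comm t]

theorem leftInverse_vshift_neg (t : ℝ) : LeftInverse (vshift (-t)) (vshift t : α × ℝ → α × ℝ) :=
  fun p => by ext <;> simp

theorem rightInverse_vshift_neg (t : ℝ) :
    RightInverse (vshift (-t)) (vshift t : α × ℝ → α × ℝ) :=
  fun p => by ext <;> simp

variable {F : α × ℝ → α × ℝ} {d : ℤ}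

theorem Function.Semiconj.vshift_intCast (h : Semiconj F (vshift 1) (vshift d)) (k : ℤ) :
    Semiconj F (vshift k) (vshift ↑(d * k)) := by
  have hneg : Semiconj F (vshift (-1)) (vshift (-d)) :=
    h.inverses_right (rightInverse_vshift_neg 1) (leftInverse_vshift_neg _)
  induction k using Int.induction_on with
  | zero => simpa [vshift_zero] using Semiconj.id_right
  | succ n ih =>
    rw [Int.cast_add, mul_add, Int.cast_add, vshift_add, vshift_add]
    simpa using ih.comp_right h
  | pred n ih =>
    rw [Int.cast_sub, mul_sub, Int.cast_sub, sub_eq_add_neg, sub_eq_add_neg, vshift_add, vshift_add]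
    simpa using ih.comp_right hneg

theorem Function.Semiconj.iterate_vshift_intCast (h : Semiconj F (vshift 1) (vshift d)) (n : ℕ)
    (k : ℤ) : Semiconj F^[n] (vshift k) (vshift ↑(d ^ n * k)) := by
  induction n generalizing k with
  | zero => simpa using Semiconj.id_left
  | succ n ih =>
    rw [iterate_succ', pow_succ', mul_assoc]
    exact (h.vshift_intCast _).comp_left (ih k)

end VerticalShift

theorem proj_add_intCast (x : ℝ) (k : ℤ) : proj (x + k) = proj x := by
  rw [proj, proj, AddCircle.coe_add, add_eq_left, AddCircle.coe_eq_zero_iff]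
  exact ⟨k, by simp⟩

theorem proj_intCast_mul (d : ℤ) (x : ℝ) : proj (d * x) = md d (proj x) := by
  rw [proj, proj, md, ← zsmul_eq_mul, AddCircle.coe_zsmul]

theorem exists_vshift_of_aproj_eq {p q : AnnCov} (h : aproj p = aproj q) :
    ∃ k : ℤ, q = vshift k p := by
  obtain ⟨h1, h2⟩ := Prod.ext_iff.1 h
  obtain ⟨k, hk⟩ := (AddCircle.coe_eq_zero_iff 1).1 (sub_eq_zero.2 h2.symm)
  refine ⟨k, Prod.ext h1.symm ?_⟩
  simp only [zsmul_eq_mul, mul_one] at hk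
  simp [hk]

theorem isQuotientMap_aproj : IsQuotientMap aproj :=
  (IsOpenQuotientMap.id.prodMap QuotientAddGroup.isOpenQuotientMap_mk).isQuotientMap

theorem exists_continuous_descent {H : AnnCov → ℝ} (hH : Continuous H)
    (hper : ∀ (k : ℤ) p, H (vshift k p) = H p + k) :
    ∃ h : Ann → S1, Continuous h ∧ ∀ p, h (aproj p) = proj (H p) := by
  have hfib : FactorsThrough (proj ∘ H) aproj := fun p q hpq => by
    obtain ⟨k, rfl⟩ := exists_vshift_of_aproj_eq hpq
    simp [hper, proj_add_intCast]
  have hlift (p : AnnCov) : extend aproj (proj ∘ H) 0 (aproj p) = proj (H p) :=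
    hfib.extend_apply 0 p
  refine ⟨extend aproj (proj ∘ H) 0, isQuotientMap_aproj.continuous_iff.2 ?_, hlift⟩
  rw [show extend aproj (proj ∘ H) 0 ∘ aproj = proj ∘ H from funext hlift]
  exact (AddCircle.continuous_mk' 1).comp hH

theorem bounded_displacement_gives_semiconjugacy_general
    (d : ℤ) (hd : 1 < |d|)
    (f : Ann → Ann)
    (F : AnnCov → AnnCov) (hF : Continuous F)
    (hliftF : ∀ p : AnnCov, aproj (F p) = f (aproj p))
    (hdeg : ∀ (x : Set.Ioo (0:ℝ) 1) (y : ℝ),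
      (F (x, y + 1)).1 = (F (x, y)).1 ∧ (F (x, y + 1)).2 = (F (x, y)).2 + d)
    (hbd : ∃ M : ℝ, ∀ p : AnnCov, |(F p).2 - (d : ℝ) * p.2| ≤ M) :
    ∃ H : AnnCov → ℝ, Continuous H ∧
      (∀ (x : Set.Ioo (0:ℝ) 1) (y : ℝ), H (x, y + 1) = H (x, y) + 1) ∧
      (∀ p, H (F p) = (d : ℝ) * H p) ∧
      (∃ M : ℝ, ∀ p : AnnCov, |H p - p.2| ≤ M) ∧
      ∃ h : Ann → S1, Continuous h ∧ (∀ p : AnnCov, h (aproj p) = proj (H p)) ∧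
        ∀ a, h (f a) = md d (h a) := by
  obtain ⟨M, hM⟩ := hbd
  have hdR : 1 < |(d : ℝ)| := by exact_mod_cast hd
  have hdeck : Semiconj F (vshift 1) (vshift d) := fun p =>
    Prod.ext (hdeg p.1 p.2).1 (hdeg p.1 p.2).2
  set H := linearizingCoord F Prod.snd (d : ℝ)
  have hHc : Continuous H := continuous_linearizingCoord hdR hM hF continuous_snd
  have hHF (p : AnnCov) : H (F p) = d * H p := linearizingCoord_apply_map hdR hM p
  have hHdeck (k : ℤ) (p : AnnCov) : H (vshift k p) = H p + k :=
    linearizingCoord_apply_eq_add hdR hM (fun n q => by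
      rw [(hdeck.iterate_vshift_intCast n k).eq]; push_cast; rfl) p
  obtain ⟨h, hhc, hh⟩ := exists_continuous_descent hHc hHdeck
  refine ⟨H, hHc, fun x y => by simpa [vshift] using hHdeck 1 (x, y), hHF,
    ⟨_, abs_linearizingCoord_sub_le hdR hM⟩, h, hhc, hh, fun a => ?_⟩
  obtain ⟨p, rfl⟩ := isQuotientMap_aproj.surjective a
  rw [← hliftF, hh, hh, hHF, proj_intCast_mul]

/-- if a lift `F` of a degree-`d` map `f` of the open annulus
satisfies `sup |y₁ − d·y₀| < ∞`, then there is a continuous `H` with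
`H(x,y+1) = H(x,y)+1`, `H∘F = d·H` and `sup |H(x,y) − y| < ∞`; in particular `f`
is semiconjugate to `m_d` on `S¹`. -/
theorem bounded_displacement_gives_semiconjugacy
    (d : ℤ) (hd : 1 < |d|)
    (f : Ann → Ann) (hf : Continuous f)
    (F : AnnCov → AnnCov) (hF : Continuous F)
    (hliftF : ∀ p : AnnCov, aproj (F p) = f (aproj p))
    (hdeg : ∀ (x : Set.Ioo (0:ℝ) 1) (y : ℝ),
      (F (x, y + 1)).1 = (F (x, y)).1 ∧ (F (x, y + 1)).2 = (F (x, y)).2 + d)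
    (hbd : ∃ M : ℝ, ∀ p : AnnCov, |(F p).2 - (d : ℝ) * p.2| ≤ M) :
    ∃ H : AnnCov → ℝ, Continuous H ∧
      (∀ (x : Set.Ioo (0:ℝ) 1) (y : ℝ), H (x, y + 1) = H (x, y) + 1) ∧
      (∀ p, H (F p) = (d : ℝ) * H p) ∧
      (∃ M : ℝ, ∀ p : AnnCov, |H p - p.2| ≤ M) ∧
      ∃ h : Ann → S1, Continuous h ∧ (∀ p : AnnCov, h (aproj p) = proj (H p)) ∧
        ∀ a, h (f a) = md d (h a) :=
  bounded_displacement_gives_semiconjugacy_general d hd f F hF hliftF hdeg hbd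
end
end
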